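/- arXiv:1704.06195 — 5 statements merged into one kernel-verified Lean document; each statement's English description precedes it below -/
import Mathlib

section
/- Let p ∈ ℝ[x] be a real-rooted polynomial, let q ∈ ℝ[x] be a real-rooted polynomial all of whose roots are ≤ 0, with 1 ≤ deg q < deg p, and let φ > 0. Then q(D)p is real rooted of degree ≥ 1 and smax_φ(q(D)p) ≤ smax_φ(p) − Σ_{α ∈ roots(q)} 1/(φ−α), where the sum is over the roots of q counted with multiplicity. -/
/-- A univariate real polynomial is real rooted if all of its complex roots are real. -/
def RealRooted (p : Polynomial ℝ) : Prop :=
  ∀ z : ℂ, (Polynomial.aeval z) p = 0 → z.im = 0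

/-- `smax φ p` is the largest real root of `p' - φ·p`. -/
noncomputable def smax (φ : ℝ) (p : Polynomial ℝ) : ℝ :=
  sSup {x : ℝ | (Polynomial.derivative p - Polynomial.C φ * p).eval x = 0}

/-- `q(D)p`: substitute the derivative operator `D` for the variable of `q` and apply
the resulting differential operator to `p`. -/
noncomputable def applyDiff (q p : Polynomial ℝ) : Polynomial ℝ :=
  ∑ k ∈ Finset.range (q.natDegree + 1),
    q.coeff k • ((fun r => Polynomial.derivative r)^[k] p)

/-!
Since `q = lc(q) ∏ (X - α)` over its roots, `q(D)` is a nonzero multiple of the composite of the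
operators `D - α` with `α ≤ 0`, and it suffices to treat one factor. Write `G(y) = ∑ 1 / (y - t)`
over the roots `t` of `p`, so that `p' = G p`. At a non-real `z`, `Im G(z) = -Im z ∑ 1 / |z - t|²`
is non-zero, which keeps `p' - c p` real rooted. Above the roots `G` decreases from `+∞` to `0`,
so the largest root `b` of `p' - φ p` is the solution of `G(b) = φ`. If `r = p' - α p` and `y` is
a root of `r' - φ r` above the roots of `p`, then `(G(y) - α)(G(y) - φ) = ∑ 1 / (y - t)²`, and
Sedrakyan's inequality turns this into `G(y + 1 / (φ - α)) ≥ φ = G(b)`, i.e.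
`y + 1 / (φ - α) ≤ b`. A root `y` below some root `t` of `p` is handled by `b - t ≥ 1 / φ`.
-/

open Polynomial

theorem Multiset.sq_sum_div_le_sum_sq_div {ι 𝕜 : Type*} [Field 𝕜] [LinearOrder 𝕜]
    [IsStrictOrderedRing 𝕜] (s : Multiset ι) (f g : ι → 𝕜)
    (hg : ∀ i ∈ s, 0 < g i) :
    (s.map f).sum ^ 2 / (s.map g).sum ≤ (s.map fun i => f i ^ 2 / g i).sum := by
  set F := (s.map f).sum
  set G := (s.map g).sum
  have hG₀ : 0 ≤ G := Multiset.sum_nonneg fun x hx => by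
    obtain ⟨i, hi, rfl⟩ := Multiset.mem_map.mp hx
    exact (hg i hi).le
  rcases hG₀.eq_or_lt with hG | hG
  · rw [← hG, div_zero]
    exact Multiset.sum_nonneg fun x hx => by
      obtain ⟨i, hi, rfl⟩ := Multiset.mem_map.mp hx
      exact div_nonneg (sq_nonneg _) (hg i hi).le
  · -- `f ^ 2 / g ≥ 2 λ f - λ ^ 2 g` for every `λ`; take `λ = F / G`
    have tangent : ∀ i ∈ s, 2 * (F / G) * f i - (F / G) ^ 2 * g i ≤ f i ^ 2 / g i := by
      intro i hi
      rw [le_div_iff₀ (hg i hi)]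
      nlinarith [sq_nonneg (f i - F / G * g i)]
    calc F ^ 2 / G = 2 * (F / G) * F - (F / G) ^ 2 * G := by field_simp; ring
      _ = (s.map fun i => 2 * (F / G) * f i - (F / G) ^ 2 * g i).sum := by
        rw [Multiset.sum_map_sub, Multiset.sum_map_mul_left, Multiset.sum_map_mul_left]
      _ ≤ _ := Multiset.sum_map_le_sum_map _ _ tangent

theorem RealRooted.ne_zero {p : ℝ[X]} (hp : RealRooted p) : p ≠ 0 := by
  rintro rfl
  simpa using hp Complex.I

theorem RealRooted.splits {p : ℝ[X]} (hp : RealRooted p) : p.Splits := by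
  refine (IsAlgClosed.splits (p.map (algebraMap ℝ ℂ))).of_splits_map _ fun z hz => ?_
  have him : z.im = 0 := hp z (by
    rw [aeval_def, ← eval_map]
    exact (mem_roots'.mp hz).2)
  exact ⟨z.re, Complex.ext (by simp) (by simpa using him.symm)⟩

theorem RealRooted.C_mul {p : ℝ[X]} (hp : RealRooted p) {c : ℝ} (hc : c ≠ 0) :
    RealRooted (C c * p) := fun z hz =>
  hp z ((by simpa using hz : c = 0 ∨ _).resolve_left hc)

theorem Complex.im_one_div_sub_ofReal_mul_im_neg {z : ℂ} (hz : z.im ≠ 0) (t : ℝ) :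
    (1 / (z - t)).im * z.im < 0 := by
  have hzt : z - t ≠ 0 := fun h => hz (by simpa using congrArg Complex.im h)
  rw [one_div, Complex.inv_im, Complex.sub_im, Complex.ofReal_im, sub_zero, neg_div,
    neg_mul, neg_neg_iff_pos, div_mul_eq_mul_div]
  exact div_pos (mul_self_pos.mpr hz) (Complex.normSq_pos.mpr hzt)

theorem RealRooted.derivative_sub_C_mul {p : ℝ[X]} (hp : RealRooted p) (hdeg : 0 < p.natDegree)
    (c : ℝ) : RealRooted (derivative p - C c * p) := by
  intro z hz
  by_contra him
  set P := p.map (algebraMap ℝ ℂ)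
  have hPz : P.eval z ≠ 0 := fun h => him (hp z (by rwa [aeval_def, ← eval_map]))
  have hP'z : P.derivative.eval z = c * P.eval z := by
    rw [derivative_map, eval_map, eval_map, ← aeval_def, ← aeval_def]
    simpa [sub_eq_zero] using hz
  have hsum : (p.roots.map fun t : ℝ => 1 / (z - t)).sum = c := by
    have := (IsAlgClosed.splits P).eval_derivative_eq_eval_mul_sum hPz
    rw [hP'z, hp.splits.roots_map, Multiset.map_map, mul_comm] at this
    exact (mul_left_cancel₀ hPz this).symm
  have hneg : ((p.roots.map fun t : ℝ => 1 / (z - t)).sum).im * z.im < 0 := by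
    have hne : p.roots ≠ 0 := hp.splits.roots_ne_zero hdeg.ne'
    have := Multiset.sum_lt_sum_of_nonempty hne
      (fun t _ => Complex.im_one_div_sub_ofReal_mul_im_neg him t)
    change Complex.imAddGroupHom _ * z.im < 0
    rw [map_multiset_sum, Multiset.map_map, Multiset.sum_map_mul_right.symm]
    simpa using this
  rw [hsum, Complex.ofReal_im, zero_mul] at hneg
  exact lt_irrefl 0 hneg

namespace Polynomial

variable {K : Type*} [Field K]

theorem eval_derivative_multiset_prod_X_sub_C (s : Multiset K) {x : K}
    (hx : ((s.map fun a => X - C a).prod).eval x ≠ 0) :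
    (derivative (s.map fun a => X - C a).prod).eval x =
      ((s.map fun a => X - C a).prod).eval x * (s.map fun a => 1 / (x - a)).sum := by
  have hs : ((s.map fun a => X - C a).prod).Splits := by simp [Splits.X_sub_C]
  simpa [roots_multiset_prod_X_sub_C] using hs.eval_derivative_eq_eval_mul_sum hx

theorem eval_derivative_derivative_multiset_prod_X_sub_C (s : Multiset K) {x : K}
    (hx : ∀ a ∈ s, x ≠ a) :
    (derivative (derivative (s.map fun a => X - C a).prod)).eval x =
      ((s.map fun a => X - C a).prod).eval x *
        ((s.map fun a => 1 / (x - a)).sum ^ 2 - (s.map fun a => (1 / (x - a)) ^ 2).sum) := by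
  induction s using Multiset.induction_on with
  | empty => simp
  | cons a s ih =>
    have ha : x - a ≠ 0 := sub_ne_zero.mpr (hx a (Multiset.mem_cons_self a s))
    have hs : ∀ b ∈ s, x ≠ b := fun b hb => hx b (Multiset.mem_cons_of_mem hb)
    have hPs : ((s.map fun a => X - C a).prod).eval x ≠ 0 := by
      simpa [eval_multiset_prod, Multiset.prod_eq_zero_iff, sub_eq_zero] using
        fun h => hs x h rfl
    simp only [Multiset.map_cons, Multiset.prod_cons, Multiset.sum_cons, derivative_mul,
      derivative_X_sub_C, one_mul, derivative_add]
    simp only [eval_add, eval_mul, eval_sub, eval_X, eval_C, ih hs,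
      eval_derivative_multiset_prod_X_sub_C s hPs]
    field_simp
    ring

theorem Splits.eval_derivative_derivative_eq_eval_mul {f : K[X]} (hf : f.Splits) {x : K}
    (hx : f.eval x ≠ 0) :
    (derivative (derivative f)).eval x =
      f.eval x * ((f.roots.map fun a => 1 / (x - a)).sum ^ 2 -
        (f.roots.map fun a => (1 / (x - a)) ^ 2).sum) := by
  have hroots : ∀ a ∈ f.roots, x ≠ a := by
    rintro a ha rfl
    exact hx (mem_roots'.mp ha).2
  conv_lhs => rw [hf.eq_prod_roots, derivative_C_mul, derivative_C_mul, eval_C_mul,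
    eval_derivative_derivative_multiset_prod_X_sub_C _ hroots]
  simp [hf.eval_eq_prod_roots, eval_multiset_prod, Multiset.map_map, mul_assoc]

end Polynomial

/-- For the roots of a split polynomial `p` this is the logarithmic derivative `p' / p`. -/
noncomputable def cauchyTransform (R : Multiset ℝ) (y : ℝ) : ℝ :=
  (R.map fun t => 1 / (y - t)).sum

section CauchyTransform

variable {R : Multiset ℝ}

theorem one_div_sub_le_cauchyTransform {y s : ℝ} (hy : ∀ t ∈ R, t < y) (hs : s ∈ R) :
    1 / (y - s) ≤ cauchyTransform R y := by
  refine Multiset.single_le_sum (fun u hu => ?_) _ (Multiset.mem_map_of_mem _ hs)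
  obtain ⟨t, ht, rfl⟩ := Multiset.mem_map.mp hu
  exact (one_div_pos.mpr (sub_pos.mpr (hy t ht))).le

theorem cauchyTransform_le_card_div {y Λ : ℝ} (hΛ : ∀ t ∈ R, t ≤ Λ) (hy : Λ < y) :
    cauchyTransform R y ≤ Multiset.card R / (y - Λ) := by
  have := Multiset.sum_le_card_nsmul (R.map fun t => 1 / (y - t)) (1 / (y - Λ)) fun u hu => by
    obtain ⟨t, ht, rfl⟩ := Multiset.mem_map.mp hu
    exact one_div_le_one_div_of_le (sub_pos.mpr hy) (by linarith [hΛ t ht])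
  rwa [Multiset.card_map, nsmul_eq_mul, mul_one_div] at this

theorem cauchyTransform_lt_of_lt (hR : R ≠ 0) {x y : ℝ} (hx : ∀ t ∈ R, t < x) (hxy : x < y) :
    cauchyTransform R y < cauchyTransform R x :=
  Multiset.sum_lt_sum_of_nonempty hR fun t ht =>
    one_div_lt_one_div_of_lt (sub_pos.mpr (hx t ht)) (by linarith)

theorem continuousOn_cauchyTransform : ContinuousOn (cauchyTransform R) {y | ∀ t ∈ R, t < y} :=
  continuousOn_multiset_sum R fun t ht =>
    continuousOn_const.div (continuousOn_id.sub continuousOn_const) fun _ hy =>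
      (sub_pos.mpr (hy t ht)).ne'

theorem exists_cauchyTransform_eq (hR : R ≠ 0) {φ : ℝ} (hφ : 0 < φ) :
    ∃ y, (∀ t ∈ R, t < y) ∧ cauchyTransform R y = φ := by
  obtain ⟨Λ, hΛR, hΛ⟩ := R.toFinset.exists_max_image id (Multiset.toFinset_nonempty.mpr hR)
  simp only [Multiset.mem_toFinset, id] at hΛR hΛ
  have hcard : (1 : ℝ) ≤ Multiset.card R := by
    exact_mod_cast Multiset.card_pos.mpr hR
  -- bracket the value `φ` between a point close to the largest root and a far point
  set x₁ := Λ + 1 / (φ + 1)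
  set x₂ := Λ + Multiset.card R / φ
  have hx₁ : Λ < x₁ := by simp only [x₁]; linarith [one_div_pos.mpr (by linarith : 0 < φ + 1)]
  have hx₁₂ : x₁ ≤ x₂ := by
    simp only [x₁, x₂, add_le_add_iff_left]
    calc 1 / (φ + 1) ≤ 1 / φ := one_div_le_one_div_of_le hφ (by linarith)
      _ ≤ Multiset.card R / φ := div_le_div_of_nonneg_right hcard hφ.le
  have hφx₁ : φ ≤ cauchyTransform R x₁ := by
    have := one_div_sub_le_cauchyTransform (fun t ht => (hΛ t ht).trans_lt hx₁) hΛR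
    rw [show x₁ - Λ = 1 / (φ + 1) by simp only [x₁]; ring, one_div_one_div] at this
    linarith
  have hφx₂ : cauchyTransform R x₂ ≤ φ := by
    have := cauchyTransform_le_card_div hΛ (hx₁.trans_le hx₁₂)
    rwa [show x₂ - Λ = Multiset.card R / φ by simp only [x₂]; ring,
      div_div_cancel₀ (by positivity)] at this
  have hIcc : Set.Icc x₁ x₂ ⊆ {y | ∀ t ∈ R, t < y} := fun y hy t ht =>
    (hΛ t ht).trans_lt (hx₁.trans_le hy.1)
  obtain ⟨y, hy, hyφ⟩ := intermediate_value_Icc' hx₁₂ (continuousOn_cauchyTransform.mono hIcc)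
    ⟨hφx₂, hφx₁⟩
  exact ⟨y, hIcc hy, hyφ⟩

end CauchyTransform

theorem le_cauchyTransform_add_one_div {R : Multiset ℝ} (hR : R ≠ 0) {y α φ : ℝ}
    (hy : ∀ t ∈ R, t < y) (hα : α ≤ 0) (hφ : 0 < φ)
    (h : (cauchyTransform R y - α) * (cauchyTransform R y - φ) =
      (R.map fun t => (1 / (y - t)) ^ 2).sum) :
    φ ≤ cauchyTransform R (y + 1 / (φ - α)) := by
  set A := cauchyTransform R y
  set Ψ := (R.map fun t => (1 / (y - t)) ^ 2).sum
  set δ := 1 / (φ - α)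
  have hδ : 0 < δ := one_div_pos.mpr (by linarith)
  have hu : ∀ t ∈ R, 0 < 1 / (y - t) := fun t ht => one_div_pos.mpr (sub_pos.mpr (hy t ht))
  have hA : 0 < A := by
    obtain ⟨t, ht⟩ := Multiset.exists_mem_of_ne_zero hR
    exact (hu t ht).trans_le (one_div_sub_le_cauchyTransform hy ht)
  have hΨ : 0 ≤ Ψ := Multiset.sum_nonneg fun u hu' => by
    obtain ⟨t, ht, rfl⟩ := Multiset.mem_map.mp hu'; positivity
  -- with `u = 1 / (y - t)` one has `1 / (y + δ - t) = u ^ 2 / (u + δ u ^ 2)`: apply Sedrakyan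
  have hsedrakyan : A ^ 2 / (A + δ * Ψ) ≤ cauchyTransform R (y + δ) := by
    have := Multiset.sq_sum_div_le_sum_sq_div R (fun t => 1 / (y - t))
      (g := fun t => 1 / (y - t) + δ * (1 / (y - t)) ^ 2) fun t ht => by
        have := hu t ht; positivity
    rw [Multiset.sum_map_add, Multiset.sum_map_mul_left] at this
    refine this.trans_eq (congrArg Multiset.sum (Multiset.map_congr rfl fun t ht => ?_))
    have := (sub_pos.mpr (hy t ht)).ne'
    field_simp
    ring
  refine le_trans ?_ hsedrakyan
  rw [le_div_iff₀ (by positivity)]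
  have hφα : 0 < φ - α := by linarith
  have key : φ * (A * (φ - α) + Ψ) ≤ A ^ 2 * (φ - α) := by
    -- after substituting `Ψ`, the difference of the two sides is `-α (A - φ) ^ 2`
    rw [← h]
    nlinarith [mul_nonneg (neg_nonneg.mpr hα) (sq_nonneg (A - φ))]
  calc φ * (A + δ * Ψ) = φ * (A * (φ - α) + Ψ) / (φ - α) := by
        simp only [δ]; field_simp
    _ ≤ A ^ 2 := by rwa [div_le_iff₀ hφα]

theorem Polynomial.eval_ne_zero_of_roots_lt {R : Type*} [CommRing R] [IsDomain R] [LinearOrder R]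
    {p : R[X]} (hp : p ≠ 0) {x : R}
    (hx : ∀ t ∈ p.roots, t < x) : p.eval x ≠ 0 := fun h =>
  lt_irrefl x (hx x (mem_roots'.mpr ⟨hp, h⟩))

theorem Polynomial.Splits.eval_derivative_sub_C_mul {p : ℝ[X]} (hp : p.Splits) {x : ℝ}
    (hx : p.eval x ≠ 0) (c : ℝ) :
    (derivative p - C c * p).eval x = p.eval x * (cauchyTransform p.roots x - c) := by
  rw [eval_sub, eval_mul, eval_C, hp.eval_derivative_eq_eval_mul_sum hx, cauchyTransform]
  ring

/-- Above the roots of `p` the equation `p' = φ p` reads `cauchyTransform p.roots = φ`, whose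
left side decreases from `+∞` to `0`; its unique solution there is the largest root of `p' - φ p`. -/
theorem smax_spec {p : ℝ[X]} (hp : p.Splits) (hroots : p.roots ≠ 0) {φ : ℝ} (hφ : 0 < φ) :
    (∀ t ∈ p.roots, t < smax φ p) ∧ cauchyTransform p.roots (smax φ p) = φ := by
  obtain ⟨y, hy, hyφ⟩ := exists_cauchyTransform_eq hroots hφ
  suffices smax φ p = y from this ▸ ⟨hy, hyφ⟩
  have hp0 : p ≠ 0 := fun h => hroots (by simp [h])
  refine IsGreatest.csSup_eq ⟨?_, fun x hx => le_of_not_gt fun hyx => ?_⟩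
  · change (derivative p - C φ * p).eval y = 0
    rw [hp.eval_derivative_sub_C_mul (eval_ne_zero_of_roots_lt hp0 hy), hyφ, sub_self, mul_zero]
  · have hx' : ∀ t ∈ p.roots, t < x := fun t ht => (hy t ht).trans hyx
    have hlt := cauchyTransform_lt_of_lt hroots hy hyx
    rw [Set.mem_ofPred_eq, hp.eval_derivative_sub_C_mul (eval_ne_zero_of_roots_lt hp0 hx')] at hx
    exact mul_ne_zero (eval_ne_zero_of_roots_lt hp0 hx') (by linarith) hx

theorem eval_smax {p : ℝ[X]} (hp : p.Splits) (hroots : p.roots ≠ 0) {φ : ℝ} (hφ : 0 < φ) :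
    (derivative p - C φ * p).eval (smax φ p) = 0 := by
  obtain ⟨habove, hφ'⟩ := smax_spec hp hroots hφ
  rw [hp.eval_derivative_sub_C_mul
    (eval_ne_zero_of_roots_lt (fun h => hroots (by simp [h])) habove), hφ', sub_self, mul_zero]

theorem Polynomial.natDegree_sub_one_le_natDegree_derivative_sub_C_mul {R : Type*} [CommRing R]
    [IsDomain R] [CharZero R] (p : R[X]) (α : R) :
    p.natDegree - 1 ≤ (derivative p - C α * p).natDegree := by
  rcases eq_or_ne α 0 with rfl | hα
  · simp
  · rcases Nat.eq_zero_or_pos p.natDegree with h | h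
    · simp [h]
    · rw [natDegree_sub_eq_right_of_natDegree_lt, natDegree_C_mul hα]
      · exact Nat.sub_le _ _
      · rw [natDegree_C_mul hα]
        exact natDegree_derivative_lt h.ne'

theorem RealRooted.smax_derivative_sub_C_mul_le {p : ℝ[X]} (hp : RealRooted p)
    (hdeg : 2 ≤ p.natDegree) {α φ : ℝ} (hα : α ≤ 0) (hφ : 0 < φ) :
    smax φ (derivative p - C α * p) ≤ smax φ p - 1 / (φ - α) := by
  set r := derivative p - C α * p
  set y := smax φ r
  have hR : p.roots ≠ 0 := hp.splits.roots_ne_zero (by omega)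
  obtain ⟨hb, hbφ⟩ := smax_spec hp.splits hR hφ
  have hr : RealRooted r := hp.derivative_sub_C_mul (by omega) α
  have hy : (derivative r - C φ * r).eval y = 0 := eval_smax hr.splits
    (hr.splits.roots_ne_zero (by
      have : p.natDegree - 1 ≤ r.natDegree :=
        natDegree_sub_one_le_natDegree_derivative_sub_C_mul p α
      omega)) hφ
  suffices y + 1 / (φ - α) ≤ smax φ p by linarith
  by_cases habove : ∀ t ∈ p.roots, t < y
  · have hpy := eval_ne_zero_of_roots_lt hp.ne_zero habove
    have hquad : (cauchyTransform p.roots y - α) * (cauchyTransform p.roots y - φ) =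
        (p.roots.map fun t => (1 / (y - t)) ^ 2).sum := by
      simp only [r, derivative_sub, derivative_C_mul, eval_sub, eval_mul, eval_C,
        hp.splits.eval_derivative_derivative_eq_eval_mul hpy,
        hp.splits.eval_derivative_eq_eval_mul_sum hpy] at hy
      refine sub_eq_zero.mp ((mul_eq_zero.mp ?_).resolve_left hpy)
      rw [cauchyTransform]
      linear_combination hy
    by_contra! hlt
    have := cauchyTransform_lt_of_lt hR hb hlt
    linarith [le_cauchyTransform_add_one_div hR habove hα hφ hquad]
  · obtain ⟨t, ht, hyt⟩ : ∃ t ∈ p.roots, y ≤ t := by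
      simpa only [not_forall, not_lt, exists_prop] using habove
    have hbt : 1 / φ ≤ smax φ p - t := by
      have := hbφ ▸ one_div_sub_le_cauchyTransform hb ht
      exact (one_div_le (sub_pos.mpr (hb t ht)) hφ).mp this
    have : 1 / (φ - α) ≤ 1 / φ := one_div_le_one_div_of_le hφ (by linarith)
    linarith

theorem applyDiff_eq_aeval (q p : ℝ[X]) :
    applyDiff q p = aeval (derivative : Module.End ℝ ℝ[X]) q p := by
  rw [aeval_eq_sum_range, applyDiff, LinearMap.sum_apply]
  refine Finset.sum_congr rfl fun k _ => ?_
  rw [LinearMap.smul_apply, Module.End.pow_apply]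

theorem applyDiff_mul (q₁ q₂ p : ℝ[X]) :
    applyDiff (q₁ * q₂) p = applyDiff q₁ (applyDiff q₂ p) := by
  simp only [applyDiff_eq_aeval, map_mul, Module.End.mul_apply]

theorem applyDiff_C_mul (c : ℝ) (q p : ℝ[X]) : applyDiff (C c * q) p = C c * applyDiff q p := by
  rw [applyDiff_eq_aeval, applyDiff_eq_aeval, map_mul, aeval_C, Module.End.mul_apply,
    Module.algebraMap_end_apply, smul_eq_C_mul]

theorem applyDiff_X_sub_C (a : ℝ) (p : ℝ[X]) :
    applyDiff (X - C a) p = derivative p - C a * p := by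
  rw [applyDiff_eq_aeval, map_sub, aeval_X, aeval_C, LinearMap.sub_apply,
    Module.algebraMap_end_apply, smul_eq_C_mul]

theorem smax_C_mul {c : ℝ} (hc : c ≠ 0) (φ : ℝ) (p : ℝ[X]) : smax φ (C c * p) = smax φ p := by
  have : derivative (C c * p) - C φ * (C c * p) = C c * (derivative p - C φ * p) := by
    rw [derivative_C_mul]
    ring
  simp only [smax, this, eval_mul, eval_C, mul_eq_zero, hc, false_or]

theorem RealRooted.applyDiff_multiset_prod_X_sub_C {p : ℝ[X]} (hp : RealRooted p) {φ : ℝ}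
    (hφ : 0 < φ) (s : Multiset ℝ) (hs : ∀ a ∈ s, a ≤ 0)
    (hcard : Multiset.card s < p.natDegree) :
    RealRooted (applyDiff (s.map fun a => X - C a).prod p) ∧
      p.natDegree - Multiset.card s ≤ (applyDiff (s.map fun a => X - C a).prod p).natDegree ∧
      smax φ (applyDiff (s.map fun a => X - C a).prod p) ≤
        smax φ p - (s.map fun a => 1 / (φ - a)).sum := by
  induction s using Multiset.induction_on generalizing p with
  | empty => simpa [applyDiff_eq_aeval] using hp
  | cons a s ih =>
    rw [Multiset.card_cons] at hcard
    have ha := hs a (Multiset.mem_cons_self a s)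
    have hdeg := natDegree_sub_one_le_natDegree_derivative_sub_C_mul p a
    obtain ⟨hr, hrdeg, hrsmax⟩ := ih (hp.derivative_sub_C_mul (by omega) a)
      (fun b hb => hs b (Multiset.mem_cons_of_mem hb)) (by omega)
    have hstep := hp.smax_derivative_sub_C_mul_le (by omega) ha hφ
    rw [Multiset.map_cons, Multiset.prod_cons, mul_comm, applyDiff_mul, applyDiff_X_sub_C,
      Multiset.card_cons, Multiset.map_cons, Multiset.sum_cons]
    exact ⟨hr, by omega, by linarith⟩

theorem smax_shift_of_diff_op_general (p q : Polynomial ℝ) (hp : RealRooted p) (hq : RealRooted q)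
    (hqroots : ∀ α ∈ q.roots, α ≤ 0)
    (hdeg : q.natDegree < p.natDegree) (φ : ℝ) (hφ : 0 < φ) :
    RealRooted (applyDiff q p) ∧ 1 ≤ (applyDiff q p).natDegree ∧
      smax φ (applyDiff q p) ≤ smax φ p - (q.roots.map (fun α => 1 / (φ - α))).sum := by
  have hc : q.leadingCoeff ≠ 0 := leadingCoeff_ne_zero.mpr hq.ne_zero
  have hcard : Multiset.card q.roots = q.natDegree := hq.splits.natDegree_eq_card_roots.symm
  have hfactor : applyDiff q p =
      C q.leadingCoeff * applyDiff (q.roots.map fun a => X - C a).prod p := by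
    conv_lhs => rw [hq.splits.eq_prod_roots]
    exact applyDiff_C_mul _ _ _
  obtain ⟨hr, hrdeg, hrsmax⟩ :=
    hp.applyDiff_multiset_prod_X_sub_C hφ q.roots hqroots (by omega)
  rw [hfactor, smax_C_mul hc, natDegree_C_mul hc]
  exact ⟨hr.C_mul hc, by omega, hrsmax⟩

/-- If `p` is real rooted, `q` is real rooted with all roots `≤ 0` and
`1 ≤ deg q < deg p`, then for `φ > 0`, `q(D)p` is real rooted of degree `≥ 1` and
`smax_φ(q(D)p) ≤ smax_φ(p) - Σ_{α ∈ roots q} 1/(φ-α)` (roots counted with multiplicity). -/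
theorem smax_shift_of_diff_op (p q : Polynomial ℝ) (hp : RealRooted p) (hq : RealRooted q)
    (hqroots : ∀ α ∈ q.roots, α ≤ 0) (hqdeg : 1 ≤ q.natDegree)
    (hdeg : q.natDegree < p.natDegree) (φ : ℝ) (hφ : 0 < φ) :
    RealRooted (applyDiff q p) ∧ 1 ≤ (applyDiff q p).natDegree ∧
      smax φ (applyDiff q p) ≤ smax φ p - (q.roots.map (fun α => 1 / (φ - α))).sum :=
  smax_shift_of_diff_op_general p q hp hq hqroots hdeg φ hφ
end

section
/- Let p and q be monic real-rooted polynomials of degree d ≥ 1 in ℝ[x]. Then for every x ∈ ℝ, (1/d!)·Σ_{k=0}^{d} p^{(k)}(x)·q^{(d−k)}(0) = [Pol(p) ∗ Pol(q)](x, x, …, x), where Pol(p), Pol(q) ∈ ℝ[z_1,…,z_d] are the polarizations of p and q and ∗ is the convolution of multiaffine polynomials in ℝ[z_1,…,z_d]. -/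
/-- the operator ∂ⁿ/∂z₁⋯∂zₙ -/
noncomputable def diffAll {n : ℕ} (p : MvPolynomial (Fin n) ℝ) : MvPolynomial (Fin n) ℝ :=
  (List.finRange n).foldr (fun i g => MvPolynomial.pderiv i g) p

/-- the convolution of multiaffine polynomials: the unique polynomial with
`(p∗q)(2z₁,…,2zₙ) = [∂ⁿ/∂z₁⋯∂zₙ (pq)](z₁,…,zₙ)`. -/
noncomputable def conv {n : ℕ} (p q : MvPolynomial (Fin n) ℝ) : MvPolynomial (Fin n) ℝ :=
  MvPolynomial.aeval (fun i => MvPolynomial.C (2⁻¹ : ℝ) * MvPolynomial.X i) (diffAll (p * q))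

/-- the polarization of a univariate polynomial of degree at most `d`:
`Pol(p) = Σ_k (coeff k p) · e_k(z₁,…,z_d) / (d choose k)`. -/
noncomputable def polarize (d : ℕ) (p : Polynomial ℝ) : MvPolynomial (Fin d) ℝ :=
  ∑ k ∈ Finset.range (d + 1),
    (p.coeff k / (d.choose k : ℝ)) • MvPolynomial.esymm (Fin d) ℝ k

/-! Both sides are polynomials in `x` that are bilinear in the coefficient vectors of `p` and `q`,
so it suffices to compare the coefficients of `p_K q_J`. On the left this is
`K.descFactorial (d - J) * J! / d! * x ^ (K + J - d)`. On the right, `e_K e_J` is the sum of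
the monomials `z^(1_S + 1_T)` over `K`-subsets `S` and `J`-subsets `T` of `Fin d`; such a
monomial survives `∂_1 ⋯ ∂_d` only if `S ∪ T = univ`, and then becomes `2^|S ∩ T| z^(1_{S ∩ T})`.
The sets `T` with `S ∪ T = univ` are the complements of the `(d - J)`-subsets of `S`, so for each
`S` there are `K.choose (d - J)` of them. -/

open MvPolynomial Finset

theorem List.sum_map_single_one_apply_of_notMem {σ : Type*} {l : List σ} {i : σ} (hi : i ∉ l) :
    (l.map fun j => Finsupp.single j 1).sum i = 0 := by
  classical
  induction l with
  | nil => simp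
  | cons a l ih =>
    simp only [List.map_cons, List.sum_cons, Finsupp.add_apply,
      ih (fun h => hi (List.mem_cons_of_mem _ h)), add_zero]
    exact Finsupp.single_eq_of_ne (fun h => hi (h ▸ List.mem_cons_self))

theorem foldr_pderiv_monomial {σ R : Type*} [CommSemiring R] {l : List σ} (hl : l.Nodup)
    (u : σ →₀ ℕ) (c : R) :
    l.foldr (fun i g => pderiv i g) (monomial u c) =
      monomial (u - (l.map fun i => Finsupp.single i 1).sum)
        (c * (l.map fun i => (u i : R)).prod) := by
  induction l with
  | nil => simp
  | cons i l ih =>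
    obtain ⟨hi, hl⟩ := List.nodup_cons.mp hl
    simp only [List.foldr_cons, ih hl, pderiv_monomial, List.map_cons, List.sum_cons,
      List.prod_cons, tsub_tsub, Finsupp.tsub_apply, List.sum_map_single_one_apply_of_notMem hi,
      tsub_zero, add_comm]
    congr 1
    ring

theorem Finsupp.sum_single_one_apply {σ : Type*} [DecidableEq σ] (S : Finset σ) (j : σ) :
    (∑ i ∈ S, single i 1 : σ →₀ ℕ) j = if j ∈ S then 1 else 0 := by
  simp [Finsupp.finsetSum_apply, Finsupp.single_apply]

theorem eval_const_monomial_sum_single {σ R : Type*} [CommSemiring R] (V : Finset σ) (c t : R) :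
    eval (fun _ => t) (monomial (∑ i ∈ V, Finsupp.single i 1) c) = c * t ^ #V := by
  rw [← mul_one c, ← C_mul_monomial, monomial_sum_one, map_mul, map_prod, eval_C, mul_one]
  simp [eval_monomial]

theorem Finset.union_eq_univ_iff_compl_subset {α : Type*} [Fintype α] [DecidableEq α]
    {S T : Finset α} : S ∪ T = univ ↔ Tᶜ ⊆ S := by
  rw [← codisjoint_iff_compl_le_left, codisjoint_iff]
  rfl

theorem Finset.card_filter_union_eq_univ {α : Type*} [Fintype α] [DecidableEq α] (S : Finset α)
    {j : ℕ} (hj : j ≤ Fintype.card α) :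
    #{T ∈ powersetCard j univ | S ∪ T = univ} = (#S).choose (Fintype.card α - j) := by
  rw [← card_powersetCard]
  refine card_bij' (fun T _ => Tᶜ) (fun U _ => Uᶜ) (fun T hT => ?_) (fun U hU => ?_)
    (fun T _ => compl_compl T) (fun U _ => compl_compl U)
  · rw [mem_filter, mem_powersetCard_univ, union_eq_univ_iff_compl_subset] at hT
    rw [mem_powersetCard, card_compl, hT.1]
    exact ⟨hT.2, rfl⟩
  · rw [mem_powersetCard] at hU
    rw [mem_filter, mem_powersetCard_univ, union_eq_univ_iff_compl_subset, compl_compl,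
      card_compl, hU.2]
    exact ⟨by omega, hU.1⟩

noncomputable def diffAllₗ (n : ℕ) : MvPolynomial (Fin n) ℝ →ₗ[ℝ] MvPolynomial (Fin n) ℝ :=
  (List.finRange n).foldr (fun i f => (pderiv i).toLinearMap ∘ₗ f) LinearMap.id

section

variable {n : ℕ}

theorem diffAllₗ_apply (p : MvPolynomial (Fin n) ℝ) : diffAllₗ n p = diffAll p := by
  unfold diffAllₗ diffAll
  induction List.finRange n with
  | nil => rfl
  | cons i l ih => simp [ih]

theorem diffAll_monomial (u : Fin n →₀ ℕ) (c : ℝ) :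
    diffAll (monomial u c) = monomial (u - ∑ i, Finsupp.single i 1) (c * ∏ i, (u i : ℝ)) := by
  rw [diffAll, foldr_pderiv_monomial (List.nodup_finRange n), Fin.sum_univ_def, Fin.prod_univ_def]

theorem diffAll_monomial_eq_zero {u : Fin n →₀ ℕ} {i : Fin n} (hi : u i = 0) (c : ℝ) :
    diffAll (monomial u c) = 0 := by
  rw [diffAll_monomial, prod_eq_zero (mem_univ i) (by simp [hi]), mul_zero, monomial_zero]

theorem diffAll_monomial_sum_single_univ_add (V : Finset (Fin n)) (c : ℝ) :
    diffAll (monomial ((∑ i, Finsupp.single i 1) + ∑ i ∈ V, Finsupp.single i 1) c) =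
      monomial (∑ i ∈ V, Finsupp.single i 1) (c * 2 ^ #V) := by
  rw [diffAll_monomial, add_tsub_cancel_left]
  congr 2
  simp_rw [Finsupp.add_apply, Finsupp.sum_single_one_apply, if_pos (mem_univ _)]
  trans ∏ i, if i ∈ V then (2 : ℝ) else 1
  · exact prod_congr rfl fun i _ => by split_ifs <;> norm_num
  · rw [prod_ite_mem, univ_inter, prod_const]

theorem eval_const_diffAll_monomial_sum_single_add (S T : Finset (Fin n)) (t : ℝ) :
    eval (fun _ => t)
        (diffAll (monomial ((∑ i ∈ S, Finsupp.single i 1) + ∑ i ∈ T, Finsupp.single i 1) 1)) =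
      if S ∪ T = univ then (2 * t) ^ #(S ∩ T) else 0 := by
  -- `1_S + 1_T = 1_(S ∪ T) + 1_(S ∩ T)`
  rw [← sum_union_inter]
  split_ifs with h
  · rw [h, diffAll_monomial_sum_single_univ_add, eval_const_monomial_sum_single, one_mul, mul_pow]
  · obtain ⟨i, hi⟩ : ∃ i, i ∉ S ∪ T := by simpa [eq_univ_iff_forall] using h
    have hi' : i ∉ S ∩ T := fun h' => hi (inter_subset_union h')
    have hui : ((∑ j ∈ S ∪ T, Finsupp.single j 1) + ∑ j ∈ S ∩ T, Finsupp.single j 1 :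
        Fin n →₀ ℕ) i = 0 := by
      rw [Finsupp.add_apply, Finsupp.sum_single_one_apply, Finsupp.sum_single_one_apply,
        if_neg hi, if_neg hi']
    rw [diffAll_monomial_eq_zero hui, map_zero]


theorem eval_const_conv (x : ℝ) (p q : MvPolynomial (Fin n) ℝ) :
    eval (fun _ => x) (conv p q) = eval (fun _ => x / 2) (diffAll (p * q)) := by
  have halve : (aeval fun _ : Fin n => x).comp (aeval fun i => C (2⁻¹ : ℝ) * X i) =
      aeval fun _ => x / 2 := by
    ext i
    simp [div_eq_inv_mul]
  rw [conv, ← coe_aeval_eq_eval, ← coe_aeval_eq_eval]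
  exact DFunLike.congr_fun halve _

end

theorem eval_const_diffAll_esymm_mul {d : ℕ} (t : ℝ) (k : ℕ) {j : ℕ} (hj : j ≤ d) :
    eval (fun _ => t) (diffAll (esymm (Fin d) ℝ k * esymm (Fin d) ℝ j)) =
      d.choose k * k.choose (d - j) * (2 * t) ^ (k + j - d) := by
  simp_rw [esymm_eq_sum_monomial, sum_mul_sum, monomial_mul, mul_one, ← diffAllₗ_apply, map_sum,
    diffAllₗ_apply, eval_const_diffAll_monomial_sum_single_add]
  have inner : ∀ S ∈ powersetCard k (univ : Finset (Fin d)),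
      (∑ T ∈ powersetCard j univ, if S ∪ T = univ then (2 * t) ^ #(S ∩ T) else 0) =
        k.choose (d - j) * (2 * t) ^ (k + j - d) := by
    intro S hS
    rw [mem_powersetCard_univ] at hS
    rw [← sum_filter, sum_congr rfl (g := fun _ => (2 * t) ^ (k + j - d)), sum_const,
      card_filter_union_eq_univ S (by simpa using hj), hS, Fintype.card_fin, nsmul_eq_mul]
    intro T hT
    rw [mem_filter, mem_powersetCard_univ] at hT
    have hcard := card_union_add_card_inter S T
    rw [hT.2, card_univ, Fintype.card_fin, hS, hT.1] at hcard
    rw [show #(S ∩ T) = k + j - d by omega]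
  rw [sum_congr rfl inner, sum_const, card_powersetCard, card_univ, Fintype.card_fin, nsmul_eq_mul]
  ring

theorem eval_const_conv_polarize {d : ℕ} (p q : Polynomial ℝ) (x : ℝ) :
    eval (fun _ => x) (conv (polarize d p) (polarize d q)) =
      ∑ K ∈ range (d + 1), ∑ J ∈ range (d + 1),
        p.coeff K * q.coeff J * (K.choose (d - J) / d.choose J) * x ^ (K + J - d) := by
  rw [eval_const_conv, polarize, polarize, sum_mul_sum, ← diffAllₗ_apply, map_sum, map_sum]
  refine sum_congr rfl fun K hK => ?_
  rw [map_sum, map_sum]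
  refine sum_congr rfl fun J hJ => ?_
  have hKd : (d.choose K : ℝ) ≠ 0 := by
    exact_mod_cast (Nat.choose_pos (mem_range_succ_iff.mp hK)).ne'
  rw [smul_mul_smul_comm, map_smul, diffAllₗ_apply, smul_eval,
    eval_const_diffAll_esymm_mul _ _ (mem_range_succ_iff.mp hJ),
    mul_div_cancel₀ _ two_ne_zero]
  field_simp

theorem Nat.descFactorial_mul_factorial_div_factorial (K : ℕ) {d J : ℕ} (hJ : J ≤ d) :
    (K.descFactorial (d - J) * J.factorial : ℝ) / d.factorial = K.choose (d - J) / d.choose J := by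
  rw [Nat.descFactorial_eq_factorial_mul_choose, ← Nat.choose_mul_factorial_mul_factorial hJ]
  have hdJ : (d.choose J : ℝ) ≠ 0 := by exact_mod_cast (Nat.choose_pos hJ).ne'
  push_cast
  field_simp

namespace Polynomial

theorem eval_iterate_derivative_eq_sum_range {R : Type*} [CommSemiring R] {p : R[X]} {d : ℕ}
    (hp : p.natDegree ≤ d) (k : ℕ) (x : R) :
    (derivative^[k] p).eval x =
      ∑ K ∈ range (d + 1), (K.descFactorial k : R) * p.coeff K * x ^ (K - k) := by
  conv_lhs => rw [p.as_sum_range_C_mul_X_pow' (n := d + 1) (by omega)]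
  simp only [iterate_derivative_sum, iterate_derivative_C_mul, iterate_derivative_X_pow_eq_smul,
    eval_finsetSum]
  refine sum_congr rfl fun K _ => ?_
  simp only [eval_mul, eval_C, eval_smul, eval_pow, eval_X]
  ring

theorem eval_zero_iterate_derivative {R : Type*} [CommSemiring R] (p : R[X]) (k : ℕ) :
    (derivative^[k] p).eval 0 = k.factorial * p.coeff k := by
  rw [← coeff_zero_eq_eval_zero, coeff_iterate_derivative, zero_add, Nat.descFactorial_self,
    nsmul_eq_mul]

end Polynomial

theorem free_conv_eq_polarized_conv_general (d : ℕ) (p q : Polynomial ℝ)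
    (hpd : p.natDegree = d) (x : ℝ) :
    (1 / (Nat.factorial d : ℝ)) *
        ∑ k ∈ Finset.range (d + 1),
          ((fun r => Polynomial.derivative r)^[k] p).eval x *
            ((fun r => Polynomial.derivative r)^[d - k] q).eval 0 =
      MvPolynomial.eval (fun _ => x) (conv (polarize d p) (polarize d q)) := by
  rw [eval_const_conv_polarize, sum_comm, ← sum_range_reflect, mul_sum]
  refine sum_congr rfl fun J hJ => ?_
  have hJd : J ≤ d := mem_range_succ_iff.mp hJ
  rw [add_tsub_cancel_right, Nat.sub_sub_self hJd,
    Polynomial.eval_iterate_derivative_eq_sum_range hpd.le, Polynomial.eval_zero_iterate_derivative,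
    sum_mul, mul_sum]
  refine sum_congr rfl fun K _ => ?_
  rw [← Nat.descFactorial_mul_factorial_div_factorial K hJd, show K - (d - J) = K + J - d by omega]
  ring

/-- For monic real-rooted `p, q` of degree `d ≥ 1`, the finite free additive convolution
`(1/d!)·Σ_{k=0}^{d} p^{(k)}(x)·q^{(d−k)}(0)` equals the diagonal evaluation of
`Pol(p) ∗ Pol(q)`. -/
theorem free_conv_eq_polarized_conv (d : ℕ) (hd : 1 ≤ d) (p q : Polynomial ℝ)
    (hpm : p.Monic) (hqm : q.Monic) (hpd : p.natDegree = d) (hqd : q.natDegree = d)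
    (hp : RealRooted p) (hq : RealRooted q) (x : ℝ) :
    (1 / (Nat.factorial d : ℝ)) *
        ∑ k ∈ Finset.range (d + 1),
          ((fun r => Polynomial.derivative r)^[k] p).eval x *
            ((fun r => Polynomial.derivative r)^[d - k] q).eval 0 =
      MvPolynomial.eval (fun _ => x) (conv (polarize d p) (polarize d q)) :=
  free_conv_eq_polarized_conv_general d p q hpd x
end

section
/- Let p and q be multiaffine real stable polynomials in ℝ[z_1,…,z_n] and let r = q(∂)p. Then, as polynomials in the 2n variables z_1,…,z_n,y_1,…,y_n, one has r(z_1+y_1,…,z_n+y_n) = [∏_{i=1}^{n} (∂/∂z_i + ∂/∂y_i)] ( p(z_1,…,z_n)·q̄(y_1,…,y_n) ), where q̄ is the flip of q. -/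
/-- A multivariate real polynomial is real stable if it does not vanish when all
variables take values in the open upper half plane. -/
def RealStable {σ : Type*} (p : MvPolynomial σ ℝ) : Prop :=
  ∀ z : σ → ℂ, (∀ i, 0 < (z i).im) → (MvPolynomial.aeval z) p ≠ 0

/-- degree at most 1 in each variable -/
def MultiAffine {σ : Type*} (p : MvPolynomial σ ℝ) : Prop :=
  ∀ m ∈ p.support, ∀ i, m i ≤ 1

/-- applying the differential-operator monomial `∂^m` to `p` -/
noncomputable def applyMon {σ : Type*} [Fintype σ] (m : σ →₀ ℕ) (p : MvPolynomial σ ℝ) :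
    MvPolynomial σ ℝ :=
  (Finset.univ.toList (α := σ)).foldr
    (fun i g => (fun h => MvPolynomial.pderiv i h)^[m i] g) p

/-- `q(∂)p`: substitute `∂/∂zᵢ` for `zᵢ` in `q` and apply the resulting operator to `p`. -/
noncomputable def diffOp {σ : Type*} [Fintype σ] (q p : MvPolynomial σ ℝ) :
    MvPolynomial σ ℝ :=
  ∑ m ∈ q.support, MvPolynomial.coeff m q • applyMon m p

/-- the flip of a multiaffine polynomial: `z^S ↦ z^{[n]∖S}` -/
noncomputable def flipPoly {σ : Type*} [Finite σ] (q : MvPolynomial σ ℝ) :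
    MvPolynomial σ ℝ :=
  ∑ m ∈ q.support, MvPolynomial.monomial
    (Finsupp.equivFunOnFinite.symm fun i => 1 - m i) (MvPolynomial.coeff m q)

/-!
By bilinearity it suffices to treat `p = z^S` and `q = z^T`. Then `∂^T z^S = [T ⊆ S] z^{S∖T}`,
so the left side is `∏ᵢ [Tᵢ ≤ Sᵢ] (zᵢ + yᵢ)^{Sᵢ - Tᵢ}`. On the right, `∂/∂zᵢ + ∂/∂yᵢ` is a derivation
that only sees the `i`-th factor of `z^S y^{[n]∖T} = ∏ᵢ zᵢ^{Sᵢ} yᵢ^{1 - Tᵢ}`, so the right side is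
the product of the one-variable values `(∂/∂z + ∂/∂y)(z^a y^{1-b})`, which agree with the factors
on the left in each of the four cases `a, b ∈ {0, 1}`. Here `zᵢ` is `X (Sum.inl i)` and `yᵢ` is
`X (Sum.inr i)`.
-/

open MvPolynomial

theorem List.foldr_apply_eq_prod_map_apply {ι R M : Type*} [Semiring R] [AddCommMonoid M]
    [Module R M] (f : ι → Module.End R M) (L : List ι) (x : M) :
    L.foldr (fun i y => f i y) x = (L.map f).prod x := by
  induction L with
  | nil => rfl
  | cons i L ih => simp [ih]

section Derivation

variable {R A ι : Type*} [CommSemiring R] [CommSemiring A] [Algebra R A]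

theorem Derivation.map_prod_eq_zero (D : Derivation R A A) (s : Finset ι) (f : ι → A)
    (h : ∀ i ∈ s, D (f i) = 0) : D (∏ i ∈ s, f i) = 0 :=
  Finset.prod_induction f (fun x => D x = 0)
    (fun a b ha hb => by simp [Derivation.leibniz, ha, hb]) D.map_one_eq_zero h

theorem Derivation.list_prod_apply_prod [Fintype ι] [DecidableEq ι] (d : ι → Derivation R A A)
    (F G : ι → A) (hdiag : ∀ j, d j (F j) = G j) (hF : ∀ i j, i ≠ j → d i (F j) = 0)
    (hG : ∀ i j, i ≠ j → d i (G j) = 0) {L : List ι} (hL : L.Nodup) :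
    (L.map fun i => (d i : Module.End R A)).prod (∏ j, F j) =
      ∏ j, if j ∈ L then G j else F j := by
  induction L with
  | nil => simp
  | cons i L ih =>
    obtain ⟨hi, hL⟩ := List.nodup_cons.mp hL
    rw [List.map_cons, List.prod_cons, Module.End.mul_apply, ih hL,
      ← Finset.mul_prod_erase _ _ (Finset.mem_univ i),
      ← Finset.prod_erase_mul _ _ (Finset.mem_univ i)]
    have hrest : d i (∏ j ∈ Finset.univ.erase i, if j ∈ L then G j else F j) = 0 :=
      (d i).map_prod_eq_zero _ _ fun j hj => by
        have hij := (Finset.ne_of_mem_erase hj).symm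
        split_ifs <;> simp [hF, hG, hij]
    rw [Derivation.coeFn_coe, Derivation.leibniz, hrest, smul_zero, zero_add, smul_eq_mul,
      if_neg hi, hdiag, if_pos List.mem_cons_self]
    refine congrArg (· * G i) (Finset.prod_congr rfl fun j hj => ?_)
    simp [Finset.ne_of_mem_erase hj]

end Derivation

namespace MvPolynomial

variable {R σ : Type*} [CommSemiring R]

theorem iterate_pderiv_monomial (i : σ) (k : ℕ) (s : σ →₀ ℕ) (a : R) :
    (pderiv i)^[k] (monomial s a) =
      monomial (s - Finsupp.single i k) (a * (s i).descFactorial k) := by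
  induction k with
  | zero => simp
  | succ k ih =>
    rw [Function.iterate_succ_apply', ih, pderiv_monomial, tsub_tsub, ← Finsupp.single_add,
      Finsupp.tsub_apply, Finsupp.single_eq_same, Nat.descFactorial_succ,
      Nat.cast_mul, mul_comm ((s i - k : ℕ) : R), mul_assoc]

theorem list_prod_pow_pderiv_monomial [DecidableEq σ] (m s : σ →₀ ℕ) (a : R) {L : List σ}
    (hL : L.Nodup) :
    (L.map fun i => (pderiv (R := R) i).toLinearMap ^ m i).prod (monomial s a) =
      monomial (s - ∑ i ∈ L.toFinset, Finsupp.single i (m i))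
        (a * ∏ i ∈ L.toFinset, ((s i).descFactorial (m i) : R)) := by
  induction L with
  | nil => simp
  | cons i L ih =>
    obtain ⟨hi, hL⟩ := List.nodup_cons.mp hL
    have hiL : i ∉ L.toFinset := by simpa using hi
    have hsi : (s - ∑ j ∈ L.toFinset, Finsupp.single j (m j)) i = s i := by
      simp [Finsupp.single_apply, hiL]
    rw [List.map_cons, List.prod_cons, Module.End.mul_apply, ih hL, Module.End.pow_apply,
      Derivation.coeFn_coe, iterate_pderiv_monomial, hsi, List.toFinset_cons,
      Finset.sum_insert hiL, Finset.prod_insert hiL, tsub_tsub, add_comm (Finsupp.single i _)]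
    congr 1
    ring

end MvPolynomial

section applyMon

variable {σ : Type*} [Fintype σ]

theorem applyMon_eq_list_prod (m : σ →₀ ℕ) (p : MvPolynomial σ ℝ) :
    applyMon m p =
      (Finset.univ.toList.map fun i => (pderiv (R := ℝ) i).toLinearMap ^ m i).prod p := by
  rw [applyMon, ← List.foldr_apply_eq_prod_map_apply]
  simp only [Module.End.pow_apply, Derivation.coeFn_coe]

theorem applyMon_monomial (m s : σ →₀ ℕ) (a : ℝ) :
    applyMon m (monomial s a) = monomial (s - m) (a * ∏ i, ((s i).descFactorial (m i) : ℝ)) := by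
  classical
  rw [applyMon_eq_list_prod, list_prod_pow_pderiv_monomial _ _ _ (Finset.nodup_toList _),
    Finset.toList_toFinset, Finsupp.univ_sum_single]

end applyMon

section sumDeriv

variable {R σ : Type*} [CommSemiring R]

noncomputable def sumDeriv (i : σ) :
    Derivation R (MvPolynomial (σ ⊕ σ) R) (MvPolynomial (σ ⊕ σ) R) :=
  pderiv (Sum.inl i) + pderiv (Sum.inr i)

theorem foldr_pderiv_add_pderiv_eq_list_prod (L : List σ) (x : MvPolynomial (σ ⊕ σ) R) :
    L.foldr (fun i g => pderiv (Sum.inl i) g + pderiv (Sum.inr i) g) x =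
      (L.map fun i => (sumDeriv (R := R) i).toLinearMap).prod x :=
  List.foldr_apply_eq_prod_map_apply (fun i => (sumDeriv i).toLinearMap) L x

theorem sumDeriv_X_pow_mul_X_pow (i : σ) {a b : ℕ} (ha : a ≤ 1) (hb : b ≤ 1) :
    sumDeriv i (X (Sum.inl i) ^ a * X (Sum.inr i) ^ (1 - b) : MvPolynomial (σ ⊕ σ) R) =
      C (a.descFactorial b : R) * (X (Sum.inl i) + X (Sum.inr i)) ^ (a - b) := by
  interval_cases a <;> interval_cases b <;> simp [sumDeriv, add_comm]

theorem sumDeriv_X_pow_mul_X_pow_of_ne {i j : σ} (h : i ≠ j) (a b : ℕ) :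
    sumDeriv i (X (Sum.inl j) ^ a * X (Sum.inr j) ^ b : MvPolynomial (σ ⊕ σ) R) = 0 := by
  simp [sumDeriv, pderiv_X_of_ne, h.symm]

theorem sumDeriv_C_mul_X_add_X_pow_of_ne {i j : σ} (h : i ≠ j) (c : R) (k : ℕ) :
    sumDeriv i (C c * (X (Sum.inl j) + X (Sum.inr j)) ^ k : MvPolynomial (σ ⊕ σ) R) = 0 := by
  simp [sumDeriv, pderiv_X_of_ne, h.symm]

end sumDeriv

theorem smul_aeval_applyMon_monomial {σ : Type*} [Fintype σ] [DecidableEq σ] {L : List σ}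
    (hL : L.Nodup) (hmem : ∀ i, i ∈ L) {s m : σ →₀ ℕ} (hs : ∀ i, s i ≤ 1) (hm : ∀ i, m i ≤ 1)
    (a c : ℝ) :
    c • aeval (fun i => (X (Sum.inl i) + X (Sum.inr i) : MvPolynomial (σ ⊕ σ) ℝ))
        (applyMon m (monomial s a)) =
      (L.map fun i => (sumDeriv (R := ℝ) i).toLinearMap).prod
        (rename Sum.inl (monomial s a) *
          rename Sum.inr (monomial (Finsupp.equivFunOnFinite.symm fun i => 1 - m i) c)) := by
  set F : σ → MvPolynomial (σ ⊕ σ) ℝ := fun j => X (Sum.inl j) ^ s j * X (Sum.inr j) ^ (1 - m j)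
  set G : σ → MvPolynomial (σ ⊕ σ) ℝ := fun j =>
    C ((s j).descFactorial (m j) : ℝ) * (X (Sum.inl j) + X (Sum.inr j)) ^ (s j - m j)
  have hrhs : rename Sum.inl (monomial s a) *
      rename Sum.inr (monomial (Finsupp.equivFunOnFinite.symm fun i => 1 - m i) c) =
      (a * c) • ∏ j, F j := by
    simp only [monomial_eq, Finsupp.prod_fintype _ _ (fun _ => pow_zero _), map_mul, map_prod,
      rename_C, rename_X, map_pow, Finset.prod_mul_distrib, smul_eq_C_mul, F,
      Finsupp.equivFunOnFinite_symm_apply_apply]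
    ring
  have hlhs : aeval (fun i => (X (Sum.inl i) + X (Sum.inr i) : MvPolynomial (σ ⊕ σ) ℝ))
      (applyMon m (monomial s a)) = a • ∏ j, G j := by
    simp only [applyMon_monomial, aeval_monomial, Finsupp.prod_fintype _ _ (fun _ => pow_zero _),
      Finsupp.tsub_apply, smul_eq_C_mul, G, Finset.prod_mul_distrib, map_prod, algebraMap_eq,
      map_mul, mul_assoc]
  rw [hrhs, map_smul, Derivation.list_prod_apply_prod sumDeriv F G
      (fun j => sumDeriv_X_pow_mul_X_pow j (hs j) (hm j))
      (fun i j h => sumDeriv_X_pow_mul_X_pow_of_ne h _ _)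
      (fun i j h => sumDeriv_C_mul_X_add_X_pow_of_ne h _ _) hL, hlhs, smul_smul, mul_comm c a]
  simp only [hmem, if_true]

theorem diffOp_sum_vars_eq_general {n : ℕ} (p q : MvPolynomial (Fin n) ℝ)
    (hpm : MultiAffine p) (hqm : MultiAffine q) :
    MvPolynomial.aeval
        (fun i : Fin n =>
          (MvPolynomial.X (Sum.inl i) + MvPolynomial.X (Sum.inr i) :
            MvPolynomial (Fin n ⊕ Fin n) ℝ))
        (diffOp q p) =
      (List.finRange n).foldr
        (fun i g => MvPolynomial.pderiv (Sum.inl i) g + MvPolynomial.pderiv (Sum.inr i) g)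
        (MvPolynomial.rename Sum.inl p * MvPolynomial.rename Sum.inr (flipPoly q)) := by
  rw [foldr_pderiv_add_pderiv_eq_list_prod, diffOp, flipPoly, map_sum, map_sum (rename _),
    Finset.mul_sum, map_sum]
  refine Finset.sum_congr rfl fun m hm => ?_
  rw [← support_sum_monomial_coeff p, map_smul, applyMon_eq_list_prod, map_sum, map_sum,
    Finset.smul_sum, map_sum, Finset.sum_mul, map_sum]
  refine Finset.sum_congr rfl fun s hs => ?_
  rw [← applyMon_eq_list_prod]
  exact smul_aeval_applyMon_monomial (List.nodup_finRange n) List.mem_finRange (hpm s hs)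
    (hqm m hm) _ _

/-- For multiaffine real stable `p, q` and `r = q(∂)p`, in the `2n` variables
`z₁,…,zₙ,y₁,…,yₙ` (the `z`'s indexed by `Sum.inl`, the `y`'s by `Sum.inr`) one has
`r(z₁+y₁,…,zₙ+yₙ) = [∏ᵢ (∂/∂zᵢ + ∂/∂yᵢ)] (p(z)·q̄(y))` where `q̄` is the flip of `q`. -/
theorem diffOp_sum_vars_eq {n : ℕ} (p q : MvPolynomial (Fin n) ℝ)
    (hps : RealStable p) (hqs : RealStable q)
    (hpm : MultiAffine p) (hqm : MultiAffine q) :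
    MvPolynomial.aeval
        (fun i : Fin n =>
          (MvPolynomial.X (Sum.inl i) + MvPolynomial.X (Sum.inr i) :
            MvPolynomial (Fin n ⊕ Fin n) ℝ))
        (diffOp q p) =
      (List.finRange n).foldr
        (fun i g => MvPolynomial.pderiv (Sum.inl i) g + MvPolynomial.pderiv (Sum.inr i) g)
        (MvPolynomial.rename Sum.inl p * MvPolynomial.rename Sum.inr (flipPoly q)) :=
  diffOp_sum_vars_eq_general p q hpm hqm
end

section
/- Let p and q be multiaffine real stable polynomials in ℝ[z_1,…,z_n]. Then the convolution p∗q is multiaffine, and it is either identically zero or real stable. -/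
namespace MvPolynomial

variable {R σ : Type*} [CommSemiring R]

theorem coeff_aeval_C_mul_X (c : R) (p : MvPolynomial σ R) (m : σ →₀ ℕ) :
    coeff m (aeval (fun i ↦ C c * X i) p) = c ^ m.degree * coeff m p := by
  classical
  induction p using MvPolynomial.induction_on' with
  | add p q hp hq => rw [map_add, coeff_add, hp, hq, coeff_add, mul_add]
  | monomial n a =>
    have : aeval (fun i ↦ C c * X i) (monomial n a) = monomial n (c ^ n.degree * a) := by
      rw [aeval_monomial, monomial_eq, Finsupp.prod, Finsupp.prod]
      simp only [mul_pow, Finset.prod_mul_distrib, ← map_pow, ← map_prod,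
        Finset.prod_pow_eq_pow_sum, algebraMap_eq, Finsupp.degree_apply, map_mul]
      ring
    rw [this, coeff_monomial, coeff_monomial]
    split_ifs with h <;> simp [h]

theorem degreeOf_aeval_C_mul_X_le (c : R) (p : MvPolynomial σ R) (j : σ) :
    degreeOf j (aeval (fun i ↦ C c * X i) p) ≤ degreeOf j p :=
  degreeOf_le_iff.2 fun m hm ↦ monomial_le_degreeOf j <| mem_support_iff.2 <|
    right_ne_zero_of_mul <| by rwa [← coeff_aeval_C_mul_X, ← mem_support_iff]

theorem add_single_mem_support_of_mem_support_pderiv {i : σ} {p : MvPolynomial σ R}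
    {m : σ →₀ ℕ} (hm : m ∈ (pderiv i p).support) : m + Finsupp.single i 1 ∈ p.support := by
  rw [mem_support_iff, coeff_pderiv] at hm
  exact mem_support_iff.2 (left_ne_zero_of_mul hm)

theorem degreeOf_pderiv_le (i j : σ) (p : MvPolynomial σ R) :
    degreeOf j (pderiv i p) ≤ degreeOf j p :=
  degreeOf_le_iff.2 fun _ hm ↦ le_trans le_self_add
    (monomial_le_degreeOf j (add_single_mem_support_of_mem_support_pderiv hm))

theorem degreeOf_pderiv_self_le (i : σ) (p : MvPolynomial σ R) :
    degreeOf i (pderiv i p) ≤ degreeOf i p - 1 :=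
  degreeOf_le_iff.2 fun m hm ↦ by
    have := monomial_le_degreeOf i (add_single_mem_support_of_mem_support_pderiv hm)
    simp only [Finsupp.coe_add, Pi.add_apply, Finsupp.single_eq_same] at this
    omega

theorem degreeOf_foldr_pderiv_le (l : List σ) (p : MvPolynomial σ R) (j : σ) :
    degreeOf j (l.foldr (fun i g ↦ pderiv i g) p) ≤ degreeOf j p := by
  induction l with
  | nil => rfl
  | cons i l ih => exact (degreeOf_pderiv_le i j _).trans ih

theorem degreeOf_foldr_pderiv_le_of_mem {l : List σ} (p : MvPolynomial σ R) {j : σ}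
    (hj : j ∈ l) : degreeOf j (l.foldr (fun i g ↦ pderiv i g) p) ≤ degreeOf j p - 1 := by
  induction l with
  | nil => simp at hj
  | cons i l ih =>
    rcases eq_or_ne j i with rfl | hji
    · exact (degreeOf_pderiv_self_le j _).trans
        (Nat.sub_le_sub_right (degreeOf_foldr_pderiv_le l p j) 1)
    · exact (degreeOf_pderiv_le i j _).trans (ih ((List.mem_cons.1 hj).resolve_left hji))

end MvPolynomial

theorem exists_quadratic_vieta {K : Type*} [Field K] [IsAlgClosed K] [NeZero (2 : K)] {a : K}
    (ha : a ≠ 0) (b c : K) : ∃ v₁ v₂ : K, b = -a * (v₁ + v₂) ∧ c = a * (v₁ * v₂) := by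
  obtain ⟨s, hs⟩ := IsAlgClosed.exists_eq_mul_self (discrim a b c)
  refine ⟨(-b + s) / (2 * a), (-b - s) / (2 * a), ?_, ?_⟩
  · field_simp
    ring
  · rw [discrim] at hs
    field_simp
    linear_combination -hs

open Complex Filter Topology

theorem linear_ne_zero_of_quadratic_ne_zero {a b c : ℂ}
    (h : ∀ w : ℂ, 0 < w.im → a + b * w + c * w ^ 2 ≠ 0) (hc : c ≠ 0) {w : ℂ} (hw : 0 < w.im) :
    b + 2 * c * w ≠ 0 := by
  obtain ⟨w₁, w₂, rfl, rfl⟩ := exists_quadratic_vieta hc b a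
  have him : ∀ v, c * (v - w₁) * (v - w₂) = 0 → v.im ≤ 0 := fun v hv ↦
    not_lt.1 fun hv' ↦ h v hv' (by linear_combination hv)
  have h₁ := him w₁ (by ring)
  have h₂ := him w₂ (by ring)
  intro hw₀
  have hmean : 2 * w = w₁ + w₂ := mul_left_cancel₀ hc (by linear_combination hw₀)
  have := congrArg Complex.im hmean
  simp only [mul_im, re_ofNat, im_ofNat, zero_mul, add_zero, add_im] at this
  linarith

theorem im_div_nonpos_of_quadratic_ne_zero {a b c : ℂ}
    (h : ∀ w : ℂ, 0 < w.im → a + b * w + c * w ^ 2 ≠ 0) (ha : a ≠ 0) :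
    (b / a).im ≤ 0 ∧ (b = 0 → (c / a).im = 0) := by
  obtain ⟨v₁, v₂, rfl, rfl⟩ := exists_quadratic_vieta ha b c
  -- `a + b w + c w² = a (1 - v₁ w) (1 - v₂ w)`, so `v₁⁻¹, v₂⁻¹` lie outside the upper half plane
  have him : ∀ v, (v = v₁ ∨ v = v₂) → 0 ≤ v.im := by
    rintro v hv
    refine not_lt.1 fun hv' ↦ ?_
    have hv₀ : v ≠ 0 := by rintro rfl; simp at hv'
    refine h v⁻¹ ?_ ?_
    · rw [inv_im]; exact div_pos (by linarith) (normSq_pos.2 hv₀)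
    · rcases hv with rfl | rfl <;> field_simp <;> ring
  have h₁ := him v₁ (.inl rfl)
  have h₂ := him v₂ (.inr rfl)
  refine ⟨?_, fun hb ↦ ?_⟩
  · rw [neg_mul, neg_div, mul_div_cancel_left₀ _ ha, neg_im, add_im]
    linarith
  · obtain rfl : v₂ = -v₁ := by
      linear_combination (mul_eq_zero.1 hb).resolve_left (neg_ne_zero.2 ha)
    have : v₁.im = 0 := by rw [neg_im] at h₂; linarith
    rw [mul_div_cancel_left₀ _ ha]
    simp [this]

theorem AnalyticAt.eventually_eq_of_isLocalMax_im {g : ℂ → ℂ} {z₀ : ℂ} (hg : AnalyticAt ℂ g z₀)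
    (hmax : IsLocalMax (fun z ↦ (g z).im) z₀) : ∀ᶠ z in 𝓝 z₀, g z = g z₀ := by
  refine hg.eventually_constant_or_nhds_le_map_nhds.resolve_right fun hle ↦ ?_
  have hup : Tendsto (fun t : ℝ ↦ g z₀ + t * I) (𝓝[>] 0) (𝓝 (g z₀)) := by
    have : Tendsto (fun t : ℝ ↦ g z₀ + t * I) (𝓝 0) (𝓝 (g z₀ + (0 : ℝ) * I)) :=
      ((continuous_ofReal.mul continuous_const).const_add _).tendsto 0
    simpa using this.mono_left nhdsWithin_le_nhds
  have hnear : ∀ᶠ w in 𝓝 (g z₀), w.im ≤ (g z₀).im := hle hmax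
  obtain ⟨t, ht, htpos⟩ := ((hup.eventually hnear).and self_mem_nhdsWithin).exists
  simp only [add_im, mul_im, ofReal_re, I_im, mul_one, ofReal_im, I_re, mul_zero, add_zero,
    add_le_iff_nonpos_right] at ht htpos
  linarith

theorem Differentiable.eq_zero_of_eventually_im_div_nonpos {f a : ℂ → ℂ}
    (hf : Differentiable ℂ f) (ha : Differentiable ℂ a) {s₀ : ℂ} (hf₀ : f s₀ = 0)
    (ha₀ : a s₀ ≠ 0) (him : ∀ᶠ s in 𝓝 s₀, (f s / a s).im ≤ 0) : f = 0 := by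
  have hquot : ∀ᶠ s in 𝓝 s₀, f s / a s = f s₀ / a s₀ :=
    (hf.analyticAt s₀).div (ha.analyticAt s₀) ha₀ |>.eventually_eq_of_isLocalMax_im
      (by simpa [IsLocalMax, IsMaxFilter, hf₀] using him)
  have hzero : f =ᶠ[𝓝 s₀] 0 := by
    filter_upwards [hquot, ha.continuous.continuousAt.eventually_ne ha₀] with s hs has
    simpa [hf₀, has] using hs
  funext s
  exact (analyticOnNhd_univ_iff_differentiable.2 hf).eqOn_zero_of_preconnected_of_eventuallyEq_zero
    isPreconnected_univ (Set.mem_univ s₀) hzero (Set.mem_univ s)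

theorem eq_zero_of_quadratic_family {a b c : ℂ → ℂ} (ha : Differentiable ℂ a)
    (hb : Differentiable ℂ b) (hc : Differentiable ℂ c) {s₀ : ℂ}
    (hstab : ∀ᶠ s in 𝓝 s₀, ∀ w : ℂ, 0 < w.im → a s + b s * w + c s * w ^ 2 ≠ 0)
    (hb₀ : b s₀ = 0) (hc₀ : c s₀ = 0) : b = 0 ∧ c = 0 := by
  have ha₀ : a s₀ ≠ 0 := by simpa [hb₀, hc₀] using hstab.self_of_nhds I (by simp)
  have hratio : ∀ᶠ s in 𝓝 s₀, (b s / a s).im ≤ 0 ∧ (b s = 0 → (c s / a s).im = 0) := by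
    filter_upwards [hstab, ha.continuous.continuousAt.eventually_ne ha₀] with s hs has
    exact im_div_nonpos_of_quadratic_ne_zero hs has
  have hb' : b = 0 :=
    hb.eq_zero_of_eventually_im_div_nonpos ha hb₀ ha₀ (hratio.mono fun _ h ↦ h.1)
  refine ⟨hb', hc.eq_zero_of_eventually_im_div_nonpos ha hc₀ ha₀ ?_⟩
  exact hratio.mono fun s h ↦ (h.2 (congrFun hb' s)).le

section lineSlice

open Polynomial

theorem Polynomial.eval_eq_of_natDegree_le_two {R : Type*} [CommSemiring R] {P : R[X]}
    (h : P.natDegree ≤ 2) (w : R) : P.eval w = P.coeff 0 + P.coeff 1 * w + P.coeff 2 * w ^ 2 := by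
  rw [eval_eq_sum_range' (by omega : P.natDegree < 3)]
  simp [Finset.sum_range_succ]

theorem Polynomial.eval_derivative_eq_of_natDegree_le_two {R : Type*} [CommSemiring R]
    {P : R[X]} (h : P.natDegree ≤ 2) (w : R) :
    P.derivative.eval w = P.coeff 1 + 2 * P.coeff 2 * w := by
  rw [eval_eq_of_natDegree_le_two ((natDegree_derivative_le P).trans (by omega))]
  simp [coeff_derivative, coeff_eq_zero_of_natDegree_lt (by omega : P.natDegree < 3)]
  ring

/-- Outer variable: the `i`-th coordinate `w`; inner variable: the parameter `s` of the complex
line `v + s d` on which the other coordinates are restricted. -/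
noncomputable def lineSlice {σ : Type*} [DecidableEq σ] (i : σ) (v d : σ → ℂ) :
    MvPolynomial σ ℝ →ₐ[ℝ] ℂ[X][X] :=
  MvPolynomial.aeval (Function.update (fun j ↦ C (C (v j) + C (d j) * X)) i X)

variable {σ : Type*} [DecidableEq σ] (i : σ) (v d : σ → ℂ)

theorem eval_map_lineSlice (r : MvPolynomial σ ℝ) (s w : ℂ) :
    ((lineSlice i v d r).map (evalRingHom s)).eval w =
      MvPolynomial.aeval (Function.update (fun j ↦ v j + s * d j) i w) r := by
  induction r using MvPolynomial.induction_on with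
  | C a => simp [lineSlice, Polynomial.algebraMap_apply]
  | add p q hp hq => simp [hp, hq]
  | mul_X p j hp =>
    rw [map_mul, Polynomial.map_mul, eval_mul, hp, map_mul]
    congr 1
    rcases eq_or_ne j i with rfl | h
    · simp [lineSlice]
    · simp [lineSlice, Function.update_of_ne h]
      ring

theorem lineSlice_pderiv (r : MvPolynomial σ ℝ) :
    lineSlice i v d (MvPolynomial.pderiv i r) = derivative (lineSlice i v d r) := by
  induction r using MvPolynomial.induction_on with
  | C a => simp
  | add p q hp hq => simp [hp, hq]
  | mul_X p j hp =>
    rw [MvPolynomial.pderiv_mul, map_add, map_mul, map_mul, hp, map_mul, derivative_mul]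
    rcases eq_or_ne j i with rfl | h
    · simp [lineSlice]
    · simp [lineSlice, MvPolynomial.pderiv_X_of_ne h, Function.update_of_ne h]

theorem natDegree_lineSlice_le (r : MvPolynomial σ ℝ) :
    (lineSlice i v d r).natDegree ≤ MvPolynomial.degreeOf i r := by
  have hfactor : lineSlice i v d =
      (mapAlgHom (MvPolynomial.aeval fun j : {j // j ≠ i} ↦ C (v j) + C (d j) * X)).comp
        ((MvPolynomial.optionEquivLeft ℝ _).toAlgHom.comp
          (MvPolynomial.rename (Equiv.optionSubtypeNe i).symm)) := by
    refine MvPolynomial.algHom_ext fun j ↦ ?_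
    rcases eq_or_ne j i with rfl | h
    · simp [lineSlice]
    · simp [lineSlice, h]
  rw [hfactor, MvPolynomial.degreeOf_eq_natDegree]
  exact natDegree_map_le

variable {i} {r : MvPolynomial σ ℝ}

theorem aeval_update_eq_quadratic (hdeg : MvPolynomial.degreeOf i r ≤ 2) (s w : ℂ) :
    MvPolynomial.aeval (Function.update (fun j ↦ v j + s * d j) i w) r =
      ((lineSlice i v d r).coeff 0).eval s + ((lineSlice i v d r).coeff 1).eval s * w +
        ((lineSlice i v d r).coeff 2).eval s * w ^ 2 := by
  rw [← eval_map_lineSlice, eval_eq_of_natDegree_le_two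
    (natDegree_map_le.trans ((natDegree_lineSlice_le i v d r).trans hdeg))]
  simp

theorem aeval_update_pderiv_eq_linear (hdeg : MvPolynomial.degreeOf i r ≤ 2) (s w : ℂ) :
    MvPolynomial.aeval (Function.update (fun j ↦ v j + s * d j) i w) (MvPolynomial.pderiv i r) =
      ((lineSlice i v d r).coeff 1).eval s + 2 * ((lineSlice i v d r).coeff 2).eval s * w := by
  rw [← eval_map_lineSlice, lineSlice_pderiv, ← derivative_map,
    eval_derivative_eq_of_natDegree_le_two
      (natDegree_map_le.trans ((natDegree_lineSlice_le i v d r).trans hdeg))]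
  simp

end lineSlice

theorem exists_upperHalfPlane_aeval_ne_zero {σ : Type*} {p : MvPolynomial σ ℝ} (hp : p ≠ 0) :
    ∃ z : σ → ℂ, (∀ i, 0 < (z i).im) ∧ MvPolynomial.aeval z p ≠ 0 := by
  by_contra! h
  have hinf : {z : ℂ | 0 < z.im}.Infinite :=
    infinite_of_mem_nhds I ((isOpen_lt continuous_const continuous_im).mem_nhds (by simp))
  refine hp (MvPolynomial.map_injective (algebraMap ℝ ℂ) ofReal_injective ?_)
  refine MvPolynomial.funext_set (fun _ ↦ {z : ℂ | 0 < z.im}) (fun _ ↦ hinf) fun z hz ↦ ?_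
  rw [map_zero, map_zero, ← MvPolynomial.eval₂_eq_eval_map, ← MvPolynomial.aeval_def]
  exact h z fun j ↦ hz j trivial

theorem RealStable.mul {σ : Type*} {p q : MvPolynomial σ ℝ} (hp : RealStable p)
    (hq : RealStable q) : RealStable (p * q) := fun z hz ↦ by
  rw [map_mul]
  exact mul_ne_zero (hp z hz) (hq z hz)

theorem RealStable.aeval_C_mul_X {σ : Type*} {p : MvPolynomial σ ℝ} {c : ℝ} (hc : 0 < c)
    (hp : RealStable p) :
    RealStable (MvPolynomial.aeval (fun i ↦ MvPolynomial.C c * MvPolynomial.X i) p) :=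
  fun z hz ↦ by
    rw [MvPolynomial.comp_aeval_apply]
    refine hp _ fun i ↦ ?_
    simpa using mul_pos hc (hz i)

theorem pderiv_eq_zero_or_realStable {σ : Type*} [Finite σ] [DecidableEq σ]
    {r : MvPolynomial σ ℝ} {i : σ} (hdeg : MvPolynomial.degreeOf i r ≤ 2) (hr : RealStable r) :
    MvPolynomial.pderiv i r = 0 ∨ RealStable (MvPolynomial.pderiv i r) := by
  refine or_iff_not_imp_left.2 fun hne z hz hzero ↦ ?_
  obtain ⟨y, -, hyne⟩ := exists_upperHalfPlane_aeval_ne_zero hne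
  set T := lineSlice i z (y - z) r
  set a : ℂ → ℂ := fun s ↦ (T.coeff 0).eval s
  set b : ℂ → ℂ := fun s ↦ (T.coeff 1).eval s
  set c : ℂ → ℂ := fun s ↦ (T.coeff 2).eval s
  have hline : ∀ᶠ s in 𝓝 (0 : ℂ), ∀ j, 0 < (z j + s * (y - z) j).im := by
    refine Filter.eventually_all.2 fun j ↦ ?_
    have : Continuous fun s : ℂ ↦ (z j + s * (y - z) j).im := by fun_prop
    exact continuousAt_const.eventually_lt this.continuousAt (by simpa using hz j)
  have hstab : ∀ᶠ s in 𝓝 (0 : ℂ), ∀ w : ℂ, 0 < w.im → a s + b s * w + c s * w ^ 2 ≠ 0 := by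
    filter_upwards [hline] with s hs w hw
    rw [← aeval_update_eq_quadratic z (y - z) hdeg]
    refine hr _ fun j ↦ ?_
    rcases eq_or_ne j i with rfl | h
    · simpa using hw
    · simpa [h] using hs j
  have h₀ : b 0 + 2 * c 0 * z i = 0 := by
    rw [← aeval_update_pderiv_eq_linear z (y - z) hdeg]
    simpa using hzero
  have h₁ : b 1 + 2 * c 1 * y i ≠ 0 := by
    rw [← aeval_update_pderiv_eq_linear z (y - z) hdeg]
    simpa using hyne
  by_cases hc₀ : c 0 = 0
  · have hb₀ : b 0 = 0 := by simpa [hc₀] using h₀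
    obtain ⟨hb, hc⟩ := eq_zero_of_quadratic_family (b := b) (c := c) (T.coeff 0).differentiable
      (T.coeff 1).differentiable (T.coeff 2).differentiable hstab hb₀ hc₀
    exact h₁ (by rw [hb, hc]; simp)
  · exact linear_ne_zero_of_quadratic_ne_zero hstab.self_of_nhds hc₀ (hz i) h₀

theorem foldr_pderiv_eq_zero_or_realStable {σ : Type*} [Finite σ] [DecidableEq σ]
    (l : List σ) {r : MvPolynomial σ ℝ} (hdeg : ∀ j, MvPolynomial.degreeOf j r ≤ 2)
    (hr : RealStable r) :
    l.foldr (fun i g ↦ MvPolynomial.pderiv i g) r = 0 ∨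
      RealStable (l.foldr (fun i g ↦ MvPolynomial.pderiv i g) r) := by
  induction l with
  | nil => exact .inr hr
  | cons i l ih =>
    rcases ih with h | h
    · left
      simp [h]
    · exact pderiv_eq_zero_or_realStable
        ((MvPolynomial.degreeOf_foldr_pderiv_le l r i).trans (hdeg i)) h

theorem multiAffine_iff_degreeOf_le_one {σ : Type*} {p : MvPolynomial σ ℝ} :
    MultiAffine p ↔ ∀ i, MvPolynomial.degreeOf i p ≤ 1 :=
  ⟨fun h i ↦ MvPolynomial.degreeOf_le_iff.2 fun m hm ↦ h m hm i,
    fun h m hm i ↦ MvPolynomial.degreeOf_le_iff.1 (h i) m hm⟩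

/-- The convolution of multiaffine real stable polynomials is multiaffine, and is
either identically zero or real stable. -/
theorem conv_multiAffine_realStable {n : ℕ} (p q : MvPolynomial (Fin n) ℝ)
    (hps : RealStable p) (hqs : RealStable q)
    (hpm : MultiAffine p) (hqm : MultiAffine q) :
    MultiAffine (conv p q) ∧ (conv p q = 0 ∨ RealStable (conv p q)) := by
  have hdeg : ∀ j, MvPolynomial.degreeOf j (p * q) ≤ 2 := fun j ↦
    (MvPolynomial.degreeOf_mul_le j p q).trans
    (add_le_add (multiAffine_iff_degreeOf_le_one.1 hpm j) (multiAffine_iff_degreeOf_le_one.1 hqm j))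
  refine ⟨multiAffine_iff_degreeOf_le_one.2 fun j ↦ ?_, ?_⟩
  · calc MvPolynomial.degreeOf j (conv p q)
        _ ≤ MvPolynomial.degreeOf j (diffAll (p * q)) :=
          MvPolynomial.degreeOf_aeval_C_mul_X_le _ _ j
        _ ≤ MvPolynomial.degreeOf j (p * q) - 1 :=
          MvPolynomial.degreeOf_foldr_pderiv_le_of_mem _ (List.mem_finRange j)
        _ ≤ 1 := by have := hdeg j; omega
  · rcases foldr_pderiv_eq_zero_or_realStable (List.finRange n) hdeg (hps.mul hqs) with h | h
    · left
      simp [conv, diffAll, h]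
    · exact .inr (h.aeval_C_mul_X (by norm_num))
end

section
/- Let p be a nonzero multiaffine real stable polynomial in ℝ[z_1,…,z_n] with a ∈ ℝ^n above the roots of p, normalized so that p(a) > 0, and let i, j, k ∈ [n]. Assume (∂_i p + ∂_j p)(a) > 0 and let δ_i, δ_j ≥ 0 satisfy δ_i + δ_j ≤ p(a)/((∂_i p + ∂_j p)(a)). Then the point a − δ_i e_i − δ_j e_j is above the roots of (∂_i + ∂_j)p, in particular ((∂_i + ∂_j)p)(a − δ_i e_i − δ_j e_j) > 0, and moreover ( ∂_k((∂_i+∂_j)p) / ((∂_i+∂_j)p) )(a − δ_i e_i − δ_j e_j) ≤ (∂_k p / p)(a). -/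
def AboveRoots {σ : Type*} (p : MvPolynomial σ ℝ) (a : σ → ℝ) : Prop :=
  ∀ t : σ → ℝ, (∀ i, 0 ≤ t i) → MvPolynomial.eval (a + t) p ≠ 0

noncomputable def shiftPt {n : ℕ} (a : Fin n → ℝ) (i j : Fin n) (δi δj : ℝ) :
    Fin n → ℝ :=
  a - δi • (Pi.single i 1 : Fin n → ℝ) - δj • (Pi.single j 1 : Fin n → ℝ)

open MvPolynomial

namespace MvPolynomial

section CommSemiring

variable {R σ : Type*} [CommSemiring R] {q : MvPolynomial σ R}

lemma degreeOf_pderiv_le_s11 (u v : σ) : (pderiv v q).degreeOf u ≤ q.degreeOf u := by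
  refine degreeOf_le_iff.mpr fun m hm => ?_
  rw [mem_support_iff, coeff_pderiv] at hm
  calc m u ≤ (m + Finsupp.single v 1 : σ →₀ ℕ) u := by simp
    _ ≤ q.degreeOf u := monomial_le_degreeOf u (mem_support_iff.mpr (left_ne_zero_of_mul hm))

lemma pderiv_pderiv_self_eq_zero {v : σ} (hq : q.degreeOf v ≤ 1) :
    pderiv v (pderiv v q) = 0 := by
  ext m
  rw [coeff_pderiv, coeff_pderiv, coeff_zero, notMem_support_iff.mp, zero_mul, zero_mul]
  intro hm
  have := (degreeOf_le_iff.mp hq) _ hm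
  simp at this

variable [DecidableEq σ] {S : Type*} [CommSemiring S] [Algebra R S]

lemma aeval_monomial_add_single {v : σ} (m : σ →₀ ℕ) (c : R) (hm : m v ≤ 1)
    (x : σ → S) (s : S) :
    aeval (x + Pi.single v s) (monomial m c)
      = aeval x (monomial m c) + s * aeval x (pderiv v (monomial m c)) := by
  have hsplit : ∀ y : σ → S, (m.prod fun u e => y u ^ e)
      = y v ^ m v * (m.erase v).prod fun u e => y u ^ e := fun y =>
    (Finsupp.mul_prod_erase' m v _ fun _ => pow_zero _).symm
  have hoff : ((m.erase v).prod fun u e => (x + Pi.single v s : σ → S) u ^ e)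
      = (m.erase v).prod fun u e => x u ^ e :=
    Finsupp.prod_congr fun u hu => by
      have : u ≠ v := by rintro rfl; simp at hu
      simp [this]
  rw [pderiv_monomial, aeval_monomial, aeval_monomial, aeval_monomial, hsplit, hsplit x, hoff]
  interval_cases h : m v
  · simp
  · have herase : m - Finsupp.single v 1 = m.erase v := by
      ext u
      rcases eq_or_ne u v with rfl | hu <;> simp [*]
    simp [herase]
    ring

lemma aeval_add_single {v : σ} (hq : q.degreeOf v ≤ 1) (x : σ → S) (s : S) :
    aeval (x + Pi.single v s) q = aeval x q + s * aeval x (pderiv v q) := by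
  conv_lhs => rw [← support_sum_monomial_coeff q]
  conv_rhs => rw [← support_sum_monomial_coeff q]
  simp only [map_sum, Finset.mul_sum, ← Finset.sum_add_distrib]
  exact Finset.sum_congr rfl fun m hm =>
    aeval_monomial_add_single m _ (degreeOf_le_iff.mp hq m hm) x s

end CommSemiring

lemma pderiv_comm {R σ : Type*} [CommRing R] (q : MvPolynomial σ R) (u v : σ) :
    pderiv u (pderiv v q) = pderiv v (pderiv u q) := by
  classical
  have : ⁅pderiv u, pderiv v⁆ = (0 : Derivation R (MvPolynomial σ R) (MvPolynomial σ R)) :=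
    derivation_ext fun w => by
      rw [Derivation.commutator_apply]
      simp [pderiv_X, Pi.single_apply, apply_ite]
  have := congrArg (· q) this
  rw [Derivation.commutator_apply] at this
  simpa [sub_eq_zero] using this

end MvPolynomial

lemma MultiAffine.degreeOf_le_one {σ : Type*} {p : MvPolynomial σ ℝ} (hp : MultiAffine p)
    (v : σ) : p.degreeOf v ≤ 1 :=
  degreeOf_le_iff.mpr fun m hm => hp m hm v

lemma multiAffine_pderiv {σ : Type*} {p : MvPolynomial σ ℝ} (hp : MultiAffine p) (v : σ) :
    MultiAffine (pderiv v p) := fun m hm u =>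
  degreeOf_le_iff.mp ((degreeOf_pderiv_le_s11 u v).trans (hp.degreeOf_le_one u)) m hm

namespace MultiAffine

variable {σ : Type*} {p r : MvPolynomial σ ℝ}

lemma add (hp : MultiAffine p) (hr : MultiAffine r) : MultiAffine (p + r) := by
  classical
  exact fun m hm => (Finset.mem_union.mp (support_add hm)).elim (hp m) (hr m)

lemma pderiv_pderiv_self (hp : MultiAffine p) (v : σ) : pderiv v (pderiv v p) = 0 :=
  pderiv_pderiv_self_eq_zero (hp.degreeOf_le_one v)

variable [DecidableEq σ] {S : Type*} [CommSemiring S] [Algebra ℝ S]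

lemma aeval_add_single (hp : MultiAffine p) (x : σ → S) (v : σ) (s : S) :
    aeval (x + Pi.single v s) p = aeval x p + s * aeval x (pderiv v p) :=
  MvPolynomial.aeval_add_single (hp.degreeOf_le_one v) x s

lemma aeval_add_single_add_single (hp : MultiAffine p) (x : σ → S) (u v : σ) (s t : S) :
    aeval (x + Pi.single u s + Pi.single v t) p
      = aeval x p + s * aeval x (pderiv u p) + t * aeval x (pderiv v p)
        + s * t * aeval x (pderiv u (pderiv v p)) := by
  rw [hp.aeval_add_single, hp.aeval_add_single, (multiAffine_pderiv hp v).aeval_add_single]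
  ring

lemma eval_add_single (hp : MultiAffine p) (x : σ → ℝ) (v : σ) (s : ℝ) :
    eval (x + Pi.single v s) p = eval x p + s * eval x (pderiv v p) :=
  hp.aeval_add_single x v s

end MultiAffine

open ComplexConjugate

lemma Complex.im_mul_conj_nonneg_of_forall_ne_zero {c d : ℂ}
    (h : ∀ z : ℂ, 0 < z.im → c * z + d ≠ 0) : 0 ≤ (d * conj c).im := by
  by_contra! hneg
  have hc : c ≠ 0 := by rintro rfl; simp at hneg
  refine h (-d / c) ?_ (by field_simp; ring)
  have : (-d / c).im = -(d * conj c).im / Complex.normSq c := by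
    simp [Complex.div_im]
    ring
  rw [this]
  exact div_pos (neg_pos.mpr hneg) (Complex.normSq_pos.mpr hc)

lemma MvPolynomial.aeval_ofReal {σ : Type*} (x : σ → ℝ) (q : MvPolynomial σ ℝ) :
    aeval (fun ℓ => (x ℓ : ℂ)) q = eval x q := by
  rw [aeval_def, ← Complex.coe_algebraMap, eval, coe_eval₂Hom, eval₂_comp_left]
  rfl

namespace RealStable

variable {σ : Type*} {p : MvPolynomial σ ℝ}

open Complex in
/-- `p (y + z eᵤ + i eᵥ) = (∂ᵤp + i ∂ᵤ∂ᵥp)(y) z + (p + i ∂ᵥp)(y)` does not vanish for `Im z > 0`. -/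
lemma im_mul_conj_nonneg (hps : RealStable p) (hpm : MultiAffine p) (u v : σ) {y : σ → ℂ}
    (hy : ∀ ℓ, 0 < (y ℓ).im) :
    0 ≤ ((aeval y p + I * aeval y (pderiv v p))
      * conj (aeval y (pderiv u p) + I * aeval y (pderiv u (pderiv v p)))).im := by
  classical
  refine im_mul_conj_nonneg_of_forall_ne_zero fun z hz => ?_
  have him : ∀ ℓ, 0 < ((y + Pi.single u z + Pi.single v I : σ → ℂ) ℓ).im := by
    intro ℓ
    have hzℓ : 0 ≤ ((Pi.single u z : σ → ℂ) ℓ).im := by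
      rcases eq_or_ne ℓ u with rfl | h <;> simp [*, hz.le]
    have hIℓ : 0 ≤ ((Pi.single v I : σ → ℂ) ℓ).im := by
      rcases eq_or_ne ℓ v with rfl | h <;> simp [*]
    simp only [Pi.add_apply, add_im]
    linarith [hy ℓ]
  convert hps _ him using 1
  rw [hpm.aeval_add_single_add_single]
  ring

lemma eval_mul_eval_pderiv_pderiv_le (hps : RealStable p) (hpm : MultiAffine p) (u v : σ)
    (x : σ → ℝ) :
    eval x p * eval x (pderiv u (pderiv v p)) ≤ eval x (pderiv u p) * eval x (pderiv v p) := by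
  set y : ℝ → σ → ℂ := fun ε ℓ => x ℓ + ε * Complex.I
  set g : ℝ → ℝ := fun ε => ((aeval (y ε) p + Complex.I * aeval (y ε) (pderiv v p))
      * conj (aeval (y ε) (pderiv u p) + Complex.I * aeval (y ε) (pderiv u (pderiv v p)))).im
  have hg : Continuous g := by continuity
  have hpos : ∀ ε ∈ Set.Ioi (0 : ℝ), 0 ≤ g ε := fun ε hε =>
    hps.im_mul_conj_nonneg hpm u v fun ℓ => by simpa [y] using hε
  have h0 : 0 ≤ g 0 := ge_of_tendsto (hg.tendsto 0 |>.mono_left nhdsWithin_le_nhds)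
    (eventually_nhdsWithin_of_forall hpos)
  simp only [g, y, Complex.ofReal_zero, zero_mul, add_zero, aeval_ofReal] at h0
  simpa [Complex.mul_im, sub_nonneg, mul_comm] using h0

lemma eval_add_single_rayleigh [DecidableEq σ] (hps : RealStable p) (hpm : MultiAffine p)
    (u v w : σ) (x : σ → ℝ) (s : ℝ) :
    (eval x p + s * eval x (pderiv w p))
        * (eval x (pderiv u (pderiv v p)) + s * eval x (pderiv w (pderiv u (pderiv v p))))
      ≤ (eval x (pderiv u p) + s * eval x (pderiv w (pderiv u p)))
        * (eval x (pderiv v p) + s * eval x (pderiv w (pderiv v p))) := by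
  have h := hps.eval_mul_eval_pderiv_pderiv_le hpm u v (x + Pi.single w s)
  rwa [hpm.eval_add_single, (multiAffine_pderiv (multiAffine_pderiv hpm v) u).eval_add_single,
    (multiAffine_pderiv hpm u).eval_add_single, (multiAffine_pderiv hpm v).eval_add_single] at h

end RealStable

lemma nonneg_of_forall_nonneg_add_mul {c d : ℝ} (h : ∀ s, 0 ≤ s → 0 ≤ c + s * d) : 0 ≤ d := by
  by_contra! hd
  have := h ((|c| + 1) / -d) (div_nonneg (by positivity) (by linarith))
  rw [div_mul_eq_mul_div, div_neg, mul_div_cancel_right₀ _ hd.ne] at this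
  linarith [le_abs_self c]

@[elab_as_elim]
theorem Pi.Ici_induction {σ : Type*} [Fintype σ] [DecidableEq σ] {a : σ → ℝ}
    {P : (σ → ℝ) → Prop} (h0 : P a)
    (hstep : ∀ x, a ≤ x → P x → ∀ v s, 0 ≤ s → P (x + Pi.single v s)) {x : σ → ℝ}
    (hx : a ≤ x) : P x := by
  have key : ∀ S : Finset σ, a ≤ a + ∑ v ∈ S, Pi.single v (x v - a v) ∧
      P (a + ∑ v ∈ S, Pi.single v (x v - a v)) := by
    intro S
    induction S using Finset.induction_on with
    | empty => simpa using h0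
    | insert v S hv ih =>
      rw [Finset.sum_insert hv, add_comm (Pi.single v _), ← add_assoc]
      have hs : 0 ≤ x v - a v := sub_nonneg.mpr (hx v)
      exact ⟨ih.1.trans (le_add_of_nonneg_right (Pi.single_nonneg.mpr hs)),
        hstep _ ih.1 ih.2 v _ hs⟩
  have := (key Finset.univ).2
  rwa [Finset.univ_sum_single (fun v => x v - a v), show (fun v => x v - a v) = x - a from rfl,
    add_sub_cancel] at this

section Orthant

variable {σ : Type*} {p r : MvPolynomial σ ℝ} {a : σ → ℝ}

lemma aboveRoots_iff : AboveRoots p a ↔ ∀ x, a ≤ x → eval x p ≠ 0 :=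
  ⟨fun h x hx => by simpa using h (x - a) fun i => sub_nonneg.mpr (hx i),
    fun h t ht => h _ (le_add_of_nonneg_right ht)⟩

lemma AboveRoots.eval_pos (ha : AboveRoots p a) (hpa : 0 < eval a p) {x : σ → ℝ}
    (hx : a ≤ x) : 0 < eval x p := by
  by_contra! hneg
  obtain ⟨y, hy, hy0⟩ := (convex_Ici a).isPreconnected.intermediate_value hx Set.self_mem_Ici
    (continuous_eval p).continuousOn ⟨hneg, hpa.le⟩
  exact aboveRoots_iff.mp ha y hy hy0

lemma MultiAffine.eval_pderiv_nonneg [DecidableEq σ] (hr : MultiAffine r)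
    (h : ∀ x, a ≤ x → 0 ≤ eval x r) (v : σ) {x : σ → ℝ} (hx : a ≤ x) :
    0 ≤ eval x (pderiv v r) :=
  nonneg_of_forall_nonneg_add_mul fun s hs => by
    rw [← hr.eval_add_single]
    exact h _ (hx.trans (le_add_of_nonneg_right (Pi.single_nonneg.mpr hs)))

variable [Fintype σ] [DecidableEq σ]

lemma MultiAffine.eval_le_eval (hr : MultiAffine r)
    (h : ∀ v x, a ≤ x → 0 ≤ eval x (pderiv v r)) {x : σ → ℝ} (hx : a ≤ x) :
    eval a r ≤ eval x r :=
  Pi.Ici_induction le_rfl (fun y hy ih v s hs => by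
    rw [hr.eval_add_single]
    nlinarith [h v y hy]) hx

lemma MultiAffine.eval_mul_le_eval_mul (hp : MultiAffine p) (hr : MultiAffine r)
    (hpos : ∀ x, a ≤ x → 0 < eval x p) (hpv : ∀ v x, a ≤ x → 0 ≤ eval x (pderiv v p))
    (hrv : ∀ v x, a ≤ x → eval x p * eval x (pderiv v r) ≤ eval x (pderiv v p) * eval x r)
    {x : σ → ℝ} (hx : a ≤ x) :
    eval x r * eval a p ≤ eval x p * eval a r := by
  refine Pi.Ici_induction (mul_comm _ _).le (fun y hy ih v s hs => ?_) hx
  have hPa := hpos a le_rfl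
  have hPy := hpos y hy
  have hderiv : eval y (pderiv v r) * eval a p ≤ eval y (pderiv v p) * eval a r := by
    refine le_of_mul_le_mul_left ?_ hPy
    calc eval y p * (eval y (pderiv v r) * eval a p)
        ≤ eval y (pderiv v p) * eval y r * eval a p := by
          rw [← mul_assoc]; exact mul_le_mul_of_nonneg_right (hrv v y hy) hPa.le
      _ ≤ eval y p * (eval y (pderiv v p) * eval a r) := by
          nlinarith [mul_le_mul_of_nonneg_left ih (hpv v y hy)]
  rw [hr.eval_add_single, hp.eval_add_single]
  nlinarith [mul_le_mul_of_nonneg_left hderiv hs]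

end Orthant

/-- The difference of the two sides is affine in `δ`: at `δ = 0` it is nonnegative by `hF`
and `hG`, at `δ = u` by `key₁ + key₂` plus `u E (C - u (F + G)) ≥ 0`. -/
lemma potential_inequality {P A B C E F G H u δ : ℝ} (hAB : 0 < A + B) (hu0 : 0 < u)
    (hδ0 : 0 ≤ δ) (hδu : δ ≤ u) (hP : P = u * (A + B)) (hE : 0 ≤ E)
    (hF : P * F ≤ A * C) (hG : P * G ≤ B * C)
    (key₁ : (P + -u * B) * (F + -u * H) ≤ (A + -u * E) * (C + -u * G))
    (key₂ : (P + -u * A) * (G + -u * H) ≤ (B + -u * E) * (C + -u * F)) :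
    (F + G - δ * H) * P ≤ C * (A + B - δ * E) := by
  subst hP
  have hα : 0 ≤ (A + B) * (C - u * (F + G)) := by linear_combination hF + hG
  have hα' : 0 ≤ C - u * (F + G) := (mul_nonneg_iff_of_pos_left hAB).mp hα
  have hend : 0 ≤ C * (A + B - u * E) - (F + G - u * H) * (u * (A + B)) := by
    linear_combination key₁ + key₂ + mul_nonneg (mul_nonneg hu0.le hE) hα'
  have hδ : 0 ≤ u * (C * (A + B - δ * E) - (F + G - δ * H) * (u * (A + B))) := by
    linear_combination mul_nonneg (sub_nonneg.mpr hδu) hα + mul_nonneg hδ0 hend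
  linarith [(mul_nonneg_iff_of_pos_left hu0).mp hδ]

section ShiftPt

variable {n : ℕ}

lemma shiftPt_eq (a : Fin n → ℝ) (i j : Fin n) (δi δj : ℝ) :
    shiftPt a i j δi δj = a + Pi.single i (-δi) + Pi.single j (-δj) := by
  ext ℓ
  simp only [shiftPt, Pi.add_apply, Pi.sub_apply, Pi.smul_apply, smul_eq_mul, Pi.single_apply]
  split_ifs <;> ring

lemma shiftPt_add (a t : Fin n → ℝ) (i j : Fin n) (δi δj : ℝ) :
    shiftPt a i j δi δj + t = shiftPt (a + t) i j δi δj := by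
  simp only [shiftPt_eq]
  abel

lemma MultiAffine.eval_shiftPt {p : MvPolynomial (Fin n) ℝ} (hp : MultiAffine p)
    (x : Fin n → ℝ) (i j : Fin n) (δi δj : ℝ) :
    eval (shiftPt x i j δi δj) (pderiv i p + pderiv j p)
      = eval x (pderiv i p) + eval x (pderiv j p)
        - (δi + δj) * eval x (pderiv i (pderiv j p)) := by
  have hq := (multiAffine_pderiv hp i).add (multiAffine_pderiv hp j)
  rw [shiftPt_eq, hq.eval_add_single, hq.eval_add_single,
    (multiAffine_pderiv hq j).eval_add_single]
  simp only [map_add, hp.pderiv_pderiv_self, pderiv_comm p j i,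
    (multiAffine_pderiv hp j).pderiv_pderiv_self, map_zero, add_zero, zero_add]
  ring

namespace RealStable

variable {p : MvPolynomial (Fin n) ℝ}

lemma eval_shiftPt_pos (hps : RealStable p) (hpm : MultiAffine p) {x : Fin n → ℝ}
    {i j : Fin n} {δi δj : ℝ} (hi : 0 ≤ eval x (pderiv i p)) (hj : 0 ≤ eval x (pderiv j p))
    (hij : 0 ≤ eval x (pderiv i (pderiv j p)))
    (hq : 0 < eval x (pderiv i p + pderiv j p))
    (hδ : (δi + δj) * eval x (pderiv i p + pderiv j p) ≤ eval x p) :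
    0 < eval (shiftPt x i j δi δj) (pderiv i p + pderiv j p) := by
  rw [hpm.eval_shiftPt]
  rw [map_add] at hq hδ
  have hray := hps.eval_mul_eval_pderiv_pderiv_le hpm i j x
  -- `(δi + δj) ∂ᵢ∂ⱼp (∂ᵢp + ∂ⱼp) ≤ p ∂ᵢ∂ⱼp ≤ ∂ᵢp ∂ⱼp < (∂ᵢp + ∂ⱼp)²`
  nlinarith [mul_le_mul_of_nonneg_right hδ hij, mul_nonneg hi hj]

lemma eval_pderiv_shiftPt_mul_le (hps : RealStable p) (hpm : MultiAffine p) {a : Fin n → ℝ}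
    (hpa : 0 < eval a p) {i j : Fin n} (k : Fin n)
    (hq : 0 < eval a (pderiv i p + pderiv j p)) (hE : 0 ≤ eval a (pderiv i (pderiv j p)))
    {δi δj : ℝ} (hδi : 0 ≤ δi) (hδj : 0 ≤ δj)
    (hδ : δi + δj ≤ eval a p / eval a (pderiv i p + pderiv j p)) :
    eval (shiftPt a i j δi δj) (pderiv k (pderiv i p + pderiv j p)) * eval a p
      ≤ eval a (pderiv k p) * eval (shiftPt a i j δi δj) (pderiv i p + pderiv j p) := by
  have hkq : pderiv k (pderiv i p + pderiv j p)
      = pderiv i (pderiv k p) + pderiv j (pderiv k p) := by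
    rw [map_add, pderiv_comm p k i, pderiv_comm p k j]
  rw [hkq, (multiAffine_pderiv hpm k).eval_shiftPt, hpm.eval_shiftPt]
  rw [map_add] at hq hδ
  set u := eval a p / (eval a (pderiv i p) + eval a (pderiv j p))
  have key₁ := hps.eval_add_single_rayleigh hpm i k j a (-u)
  have key₂ := hps.eval_add_single_rayleigh hpm j k i a (-u)
  rw [pderiv_comm (pderiv k p) j i, pderiv_comm p j i] at key₁
  exact potential_inequality hq (div_pos hpa hq) (add_nonneg hδi hδj) hδ
    (div_mul_cancel₀ _ hq.ne').symm hE (hps.eval_mul_eval_pderiv_pderiv_le hpm i k a)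
    (hps.eval_mul_eval_pderiv_pderiv_le hpm j k a) key₁ key₂

end RealStable

end ShiftPt

theorem potential_shift_partial_sum_general {n : ℕ} (p : MvPolynomial (Fin n) ℝ)
    (hps : RealStable p) (hpm : MultiAffine p)
    (a : Fin n → ℝ) (ha : AboveRoots p a) (hpa : 0 < MvPolynomial.eval a p)
    (i j k : Fin n)
    (hij : 0 < MvPolynomial.eval a (MvPolynomial.pderiv i p + MvPolynomial.pderiv j p))
    (δi δj : ℝ) (hδi : 0 ≤ δi) (hδj : 0 ≤ δj)
    (hδ : δi + δj ≤ MvPolynomial.eval a p /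
      MvPolynomial.eval a (MvPolynomial.pderiv i p + MvPolynomial.pderiv j p)) :
    AboveRoots (MvPolynomial.pderiv i p + MvPolynomial.pderiv j p) (shiftPt a i j δi δj) ∧
      0 < MvPolynomial.eval (shiftPt a i j δi δj)
          (MvPolynomial.pderiv i p + MvPolynomial.pderiv j p) ∧
      MvPolynomial.eval (shiftPt a i j δi δj)
            (MvPolynomial.pderiv k (MvPolynomial.pderiv i p + MvPolynomial.pderiv j p)) /
          MvPolynomial.eval (shiftPt a i j δi δj)
            (MvPolynomial.pderiv i p + MvPolynomial.pderiv j p) ≤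
        MvPolynomial.eval a (MvPolynomial.pderiv k p) / MvPolynomial.eval a p := by
  have hP : ∀ x, a ≤ x → 0 < eval x p := fun x => ha.eval_pos hpa
  have hD1 : ∀ v x, a ≤ x → 0 ≤ eval x (pderiv v p) := fun v _ =>
    hpm.eval_pderiv_nonneg (fun y hy => (hP y hy).le) v
  have hD2 : ∀ u v x, a ≤ x → 0 ≤ eval x (pderiv u (pderiv v p)) := fun u v _ =>
    (multiAffine_pderiv hpm v).eval_pderiv_nonneg (hD1 v) u
  have hqm := (multiAffine_pderiv hpm i).add (multiAffine_pderiv hpm j)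
  have hqpos : ∀ x, a ≤ x → 0 < eval x (pderiv i p + pderiv j p) := fun x hx =>
    hij.trans_le <| hqm.eval_le_eval (fun v y hy => by
      rw [map_add, map_add]; exact add_nonneg (hD2 v i y hy) (hD2 v j y hy)) hx
  have hratio : ∀ x, a ≤ x → eval x (pderiv i p + pderiv j p) * eval a p
      ≤ eval x p * eval a (pderiv i p + pderiv j p) := fun x =>
    hpm.eval_mul_le_eval_mul hqm hP hD1 fun v y _ => by
      simp only [map_add, mul_add]
      exact add_le_add (hps.eval_mul_eval_pderiv_pderiv_le hpm v i y)
        (hps.eval_mul_eval_pderiv_pderiv_le hpm v j y)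
  have hshift : ∀ x, a ≤ x → 0 < eval (shiftPt x i j δi δj) (pderiv i p + pderiv j p) :=
    fun x hx => hps.eval_shiftPt_pos hpm (hD1 i x hx) (hD1 j x hx) (hD2 i j x hx) (hqpos x hx) <|
      calc (δi + δj) * eval x (pderiv i p + pderiv j p)
          ≤ eval a p / eval a (pderiv i p + pderiv j p) * eval x (pderiv i p + pderiv j p) :=
            mul_le_mul_of_nonneg_right hδ (hqpos x hx).le
        _ ≤ eval x p := by
          rw [div_mul_eq_mul_div, div_le_iff₀ hij]
          linarith [hratio x hx]
  refine ⟨fun t ht => ?_, hshift a le_rfl, ?_⟩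
  · rw [shiftPt_add]
    exact (hshift _ (le_add_of_nonneg_right ht)).ne'
  · rw [div_le_div_iff₀ (hshift a le_rfl) hpa]
    exact hps.eval_pderiv_shiftPt_mul_le hpm hpa k hij (hD2 i j a le_rfl) hδi hδj hδ

/-- Potential shift upon applying `∂ᵢ + ∂ⱼ` to a multiaffine real stable polynomial:
if `δᵢ + δⱼ ≤ p(a)/((∂ᵢp + ∂ⱼp)(a))` then `a - δᵢeᵢ - δⱼeⱼ` is above the roots of
`(∂ᵢ + ∂ⱼ)p` and `Φ^k` does not increase. -/
theorem potential_shift_partial_sum {n : ℕ} (p : MvPolynomial (Fin n) ℝ)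
    (hp0 : p ≠ 0) (hps : RealStable p) (hpm : MultiAffine p)
    (a : Fin n → ℝ) (ha : AboveRoots p a) (hpa : 0 < MvPolynomial.eval a p)
    (i j k : Fin n)
    (hij : 0 < MvPolynomial.eval a (MvPolynomial.pderiv i p + MvPolynomial.pderiv j p))
    (δi δj : ℝ) (hδi : 0 ≤ δi) (hδj : 0 ≤ δj)
    (hδ : δi + δj ≤ MvPolynomial.eval a p /
      MvPolynomial.eval a (MvPolynomial.pderiv i p + MvPolynomial.pderiv j p)) :
    AboveRoots (MvPolynomial.pderiv i p + MvPolynomial.pderiv j p) (shiftPt a i j δi δj) ∧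
      0 < MvPolynomial.eval (shiftPt a i j δi δj)
          (MvPolynomial.pderiv i p + MvPolynomial.pderiv j p) ∧
      MvPolynomial.eval (shiftPt a i j δi δj)
            (MvPolynomial.pderiv k (MvPolynomial.pderiv i p + MvPolynomial.pderiv j p)) /
          MvPolynomial.eval (shiftPt a i j δi δj)
            (MvPolynomial.pderiv i p + MvPolynomial.pderiv j p) ≤
        MvPolynomial.eval a (MvPolynomial.pderiv k p) / MvPolynomial.eval a p :=
  potential_shift_partial_sum_general p hps hpm a ha hpa i j k hij δi δj hδi hδj hδ
end
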